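/- arXiv:1903.02847 — 14 statements merged into one kernel-verified Lean document; each statement's English description precedes it below -/
import Mathlib

section
/- In a commutative Bezout ring, a semiprime ring is zip if and only if it is a Goldie ring. -/
/-- A commutative ring is *zip* if every ideal with zero annihilator contains a
finitely generated subideal with zero annihilator. -/
def IsZipRing (R : Type*) [CommRing R] : Prop :=
  ∀ I : Ideal R, Submodule.annihilator I = ⊥ →
    ∃ I₀ : Ideal R, I₀ ≤ I ∧ I₀.FG ∧ Submodule.annihilator I₀ = ⊥

/-- Finite Goldie (uniform) dimension: no infinite independent family of nonzero ideals. -/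
def HasFiniteGoldieDim (R : Type*) [CommRing R] : Prop :=
  ¬ ∃ f : ℕ → Ideal R, (∀ n, f n ≠ ⊥) ∧ iSupIndep f

/-- Ascending chain condition on annihilator ideals. -/
def AccOnAnnihilators (R : Type*) [CommRing R] : Prop :=
  ∀ f : ℕ → Ideal R, Monotone f →
    (∀ n, ∃ J : Ideal R, f n = Submodule.annihilator J) →
    ∃ n, ∀ m, n ≤ m → f m = f n

/-- A Goldie ring: finite Goldie dimension and ACC on annihilator ideals. -/
def IsGoldieRing (R : Type*) [CommRing R] : Prop :=
  HasFiniteGoldieDim R ∧ AccOnAnnihilators R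

section Aux

variable {R : Type*} [CommRing R]

lemma eq_zero_of_sq_eq_zero (hsp : nilradical R = 0) {x : R} (h : x * x = 0) : x = 0 := by
  have hx : x ∈ nilradical R := ⟨2, by rwa [pow_two]⟩
  rw [hsp] at hx
  simpa using hx

/-- In a semiprime ring, a family of ideals with pairwise zero products is independent. -/
lemma indep_of_pairwise_mul (hsp : nilradical R = 0) (g : ℕ → Ideal R)
    (h : ∀ m n, m ≠ n → ∀ x ∈ g m, ∀ y ∈ g n, x * y = 0) : iSupIndep g := by
  intro n
  rw [Submodule.disjoint_def]
  intro x hx hx'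
  have hle : (⨆ (j) (_ : j ≠ n), g j) ≤ Submodule.annihilator (g n) := by
    refine iSup_le fun j => iSup_le fun hj => ?_
    intro y hy
    rw [Submodule.mem_annihilator]
    intro z hz
    simpa [smul_eq_mul] using h j n hj y hy z hz
  have hxa := hle hx'
  rw [Submodule.mem_annihilator] at hxa
  exact eq_zero_of_sq_eq_zero hsp (by simpa [smul_eq_mul] using hxa x hx)

lemma zip_to_dim (hsp : nilradical R = 0) (hz : IsZipRing R) : HasFiniteGoldieDim R := by
  rintro ⟨f, hne, hind⟩
  set I : Ideal R := ⨆ n, f n with hI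
  set A : Ideal R := Submodule.annihilator I with hA
  have hK : Submodule.annihilator (I ⊔ A) = ⊥ := by
    rw [eq_bot_iff]
    intro x hx
    rw [Submodule.mem_annihilator] at hx
    have h1 : x ∈ A := by
      rw [hA, Submodule.mem_annihilator]
      intro y hy
      exact hx y (le_sup_left (a := I) (b := A) hy)
    have h2 : x * x = 0 := by
      simpa [smul_eq_mul] using hx x (le_sup_right (a := I) (b := A) h1)
    simpa using eq_zero_of_sq_eq_zero hsp h2
  obtain ⟨K₀, hK₀le, hfg, hK₀ann⟩ := hz (I ⊔ A) hK
  have hcompact := (Submodule.fg_iff_compact K₀).mp hfg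
  have hKsup : I ⊔ A = ⨆ n, (f n ⊔ A) := by
    rw [hI, iSup_sup]
  obtain ⟨s, hs⟩ := CompleteLattice.IsCompactElement.exists_finset_of_le_iSup (Ideal R) hcompact (fun n => f n ⊔ A) (hK₀le.trans hKsup.le)
  set N : ℕ := (s.sup id) + 1 with hN
  have hNs : N ∉ s := by
    intro h
    have := Finset.le_sup (f := id) h
    simp only [id] at this
    omega
  have key : f N ≤ Submodule.annihilator K₀ := by
    intro x hxN
    rw [Submodule.mem_annihilator]
    intro y hy
    have hy' : y ∈ ⨆ n ∈ s, (f n ⊔ A) := hs hy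
    have hle2 : (⨆ n ∈ s, (f n ⊔ A)) ≤ Submodule.annihilator (Submodule.span R {x}) := by
      refine iSup_le fun n => iSup_le fun hn => sup_le ?_ ?_
      · intro z hz
        rw [Submodule.mem_annihilator_span_singleton]
        have hnN : n ≠ N := fun h => hNs (h ▸ hn)
        have hdis : Disjoint (f N) (f n) :=
          (hind N).mono_right (le_iSup₂ (f := fun (j : ℕ) (_ : j ≠ N) => f j) n hnN)
        have h0 := Submodule.disjoint_def.mp hdis (z * x)
          (Ideal.mul_mem_left _ _ hxN) (Ideal.mul_mem_right _ _ hz)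
        simpa [smul_eq_mul] using h0
      · intro z hz
        rw [Submodule.mem_annihilator_span_singleton]
        rw [hA, Submodule.mem_annihilator] at hz
        exact hz x (le_iSup f N hxN)
    have hy2 := hle2 hy'
    rw [Submodule.mem_annihilator_span_singleton] at hy2
    simpa [smul_eq_mul, mul_comm] using hy2
  have hfN : f N = ⊥ := by
    rw [eq_bot_iff]
    intro x hx
    have := key hx
    rwa [hK₀ann] at this
  exact hne N hfN

lemma dim_to_acc (hsp : nilradical R = 0) (hdim : HasFiniteGoldieDim R) :
    AccOnAnnihilators R := by
  intro f hmono hann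
  by_contra hcon
  push_neg at hcon
  choose m hm hne using hcon
  set e : ℕ → ℕ := fun k => Nat.rec 0 (fun _ prev => m prev) k with he
  have hestep : ∀ k, e (k + 1) = m (e k) := fun k => rfl
  have hemono : Monotone e := monotone_nat_of_le_succ (fun k => hm (e k))
  have hlt : ∀ k, f (e k) < f (e (k + 1)) := fun k =>
    lt_of_le_of_ne (hmono (hm (e k))) (fun h => hne (e k) h.symm)
  choose J hJ using hann
  set A : ℕ → Ideal R := fun k => f (e k) with hAdef
  set B : ℕ → Ideal R := fun k => A (k + 1) ⊓ Submodule.annihilator (A k) with hBdef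
  have hBne : ∀ k, B k ≠ ⊥ := by
    intro k hbot
    obtain ⟨x, hx1, hx0⟩ := SetLike.exists_of_lt (hlt k)
    have hx0' : x ∉ Submodule.annihilator (J (e k)) := by rwa [← hJ (e k)]
    rw [Submodule.mem_annihilator] at hx0'
    push_neg at hx0'
    obtain ⟨j, hjJ, hj0⟩ := hx0'
    have hmem : x * j ∈ B k := by
      refine Submodule.mem_inf.mpr ⟨Ideal.mul_mem_right _ _ hx1, ?_⟩
      rw [Submodule.mem_annihilator]
      intro y hy
      have hy' : y ∈ Submodule.annihilator (J (e k)) := by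
        rw [← hJ (e k)]; exact hy
      rw [Submodule.mem_annihilator] at hy'
      have hyj : y * j = 0 := by simpa [smul_eq_mul] using hy' j hjJ
      rw [smul_eq_mul]
      calc x * j * y = x * (y * j) := by ring
        _ = 0 := by rw [hyj, mul_zero]
    rw [hbot] at hmem
    simp only [Submodule.mem_bot] at hmem
    exact hj0 (by simpa [smul_eq_mul] using hmem)
  have hpair : ∀ k l, k < l → ∀ x ∈ B k, ∀ y ∈ B l, x * y = 0 := by
    intro k l hkl x hx y hy
    have hxA : x ∈ A l := by
      have h1 : x ∈ A (k + 1) := hx.1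
      exact hmono (hemono hkl) h1
    have hyann : y ∈ Submodule.annihilator (A l) := hy.2
    rw [Submodule.mem_annihilator] at hyann
    have := hyann x hxA
    simpa [smul_eq_mul, mul_comm] using this
  refine hdim ⟨B, hBne, indep_of_pairwise_mul hsp B ?_⟩
  intro a b hab x hx y hy
  rcases lt_or_gt_of_ne hab with h | h
  · exact hpair a b h x hx y hy
  · rw [mul_comm]; exact hpair b a h y hy x hx

lemma dim_to_zip (hsp : nilradical R = 0) (hdim : HasFiniteGoldieDim R) : IsZipRing R := by
  classical
  intro I hI
  have key : ∃ s : Finset R, ↑s ⊆ (I : Set R) ∧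
      ∀ a ∈ I, (∀ t ∈ s, a * t = 0) → a = 0 := by
    by_contra hcon
    push_neg at hcon
    have key2 : ∀ s : Finset R, ∃ a, a ∈ I ∧
        (↑s ⊆ (I : Set R) → ((∀ t ∈ s, a * t = 0) ∧ a ≠ 0)) := by
      intro s
      by_cases h : ↑s ⊆ (I : Set R)
      · obtain ⟨a, haI, h1, h2⟩ := hcon s h
        exact ⟨a, haI, fun _ => ⟨h1, h2⟩⟩
      · exact ⟨0, I.zero_mem, fun h' => absurd h' h⟩
    choose pick hpickI hpick using key2
    set L : ℕ → List R := fun n => Nat.rec [] (fun _ l => pick l.toFinset :: l) n with hLdef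
    have hLstep : ∀ n, L (n + 1) = pick (L n).toFinset :: L n := fun n => rfl
    set c : ℕ → R := fun n => pick (L n).toFinset with hc
    have hLI : ∀ n, ↑(L n).toFinset ⊆ (I : Set R) := by
      intro n
      induction n with
      | zero => simp [hLdef]
      | succ n ih =>
        intro x hx
        rw [hLstep] at hx
        simp only [List.toFinset_cons, Finset.coe_insert, Set.mem_insert_iff] at hx
        rcases hx with rfl | hx
        · exact hpickI _
        · exact ih hx
    have hcI : ∀ n, c n ∈ I := fun n => hpickI _
    have hcne : ∀ n, c n ≠ 0 := fun n => (hpick _ (hLI n)).2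
    have hcann : ∀ n, ∀ t ∈ (L n).toFinset, c n * t = 0 := fun n => (hpick _ (hLI n)).1
    have hmemL : ∀ m n, m < n → c m ∈ L n := by
      intro m n h
      induction n with
      | zero => omega
      | succ n ih =>
        rw [hLstep]
        rcases Nat.lt_succ_iff_lt_or_eq.mp h with h' | h'
        · exact List.mem_cons_of_mem _ (ih h')
        · subst h'; exact List.mem_cons_self
    have hpair : ∀ m n, m < n → c n * c m = 0 := fun m n h =>
      hcann n _ (List.mem_toFinset.mpr (hmemL m n h))
    refine hdim ⟨fun n => Ideal.span {c n}, fun n hbot => hcne n ?_, ?_⟩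
    · rwa [Ideal.span_singleton_eq_bot] at hbot
    · refine indep_of_pairwise_mul hsp _ ?_
      intro a b hab x hx y hy
      obtain ⟨r, hr⟩ := Ideal.mem_span_singleton'.mp hx
      obtain ⟨t, ht⟩ := Ideal.mem_span_singleton'.mp hy
      have h0 : c a * c b = 0 := by
        rcases lt_or_gt_of_ne hab with h | h
        · rw [mul_comm]; exact hpair a b h
        · exact hpair b a h
      rw [← hr, ← ht]
      calc r * c a * (t * c b) = r * t * (c a * c b) := by ring
        _ = 0 := by rw [h0, mul_zero]
  obtain ⟨s, hsI, hsprop⟩ := key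
  refine ⟨Ideal.span ↑s, Ideal.span_le.mpr hsI, ⟨s, rfl⟩, ?_⟩
  rw [eq_bot_iff]
  intro x hx
  rw [Submodule.mem_annihilator] at hx
  have hxI : x ∈ Submodule.annihilator I := by
    rw [Submodule.mem_annihilator]
    intro y hy
    have hxy : x * y = 0 := by
      refine hsprop (x * y) (Ideal.mul_mem_left _ _ hy) ?_
      intro t ht
      have hxt : x * t = 0 := by
        simpa [smul_eq_mul] using hx t (Ideal.subset_span ht)
      calc x * y * t = x * t * y := by ring
        _ = 0 := by rw [hxt, zero_mul]
    simpa [smul_eq_mul] using hxy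
  rw [hI] at hxI
  simpa using hxI

end Aux

/-- In a commutative Bezout ring, a semiprime ring is zip iff it is Goldie. -/
theorem zip_iff_goldie_of_semiprime (R : Type*) [CommRing R] [IsBezout R]
    (hsp : nilradical R = 0) : IsZipRing R ↔ IsGoldieRing R := by
  constructor
  · intro hz
    have hd := zip_to_dim hsp hz
    exact ⟨hd, dim_to_acc hsp hd⟩
  · rintro ⟨hd, -⟩
    exact dim_to_zip hsp hd
end

section
/- If the classical ring of quotients Q_cl(R) of a commutative ring R is a Kasch ring, then R is a zip ring. -/
/-- A commutative ring is *Kasch* if every proper ideal has nonzero annihilator. -/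
def IsKaschRing (R : Type*) [CommRing R] : Prop :=
  ∀ I : Ideal R, I ≠ ⊤ → Submodule.annihilator I ≠ ⊥

/-- If Q_cl(R) is Kasch then R is zip. -/
theorem isZipRing_of_isKaschRing_fractionRing (R : Type*) [CommRing R]
    (h : IsKaschRing (FractionRing R)) : IsZipRing R := by
  intro I hI
  set Q := FractionRing R with hQ
  let f : R →+* Q := algebraMap R Q
  have hinj : Function.Injective f := IsFractionRing.injective R Q
  -- Step 1: the annihilator of the extension of I to Q is trivial.
  have hann : Submodule.annihilator (Ideal.map f I) = ⊥ := by
    rw [eq_bot_iff]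
    intro q hq
    rw [Submodule.mem_annihilator] at hq
    obtain ⟨⟨r, s⟩, rfl⟩ := IsLocalization.mk'_surjective (nonZeroDivisors R) q
    have hr : r ∈ Submodule.annihilator I := by
      rw [Submodule.mem_annihilator]
      intro i hi
      have h1 := hq (f i) (Ideal.mem_map_of_mem f hi)
      have h2 : IsLocalization.mk' Q (i * r) s = 0 := by
        rw [← IsLocalization.mul_mk'_eq_mk'_of_mul]
        rw [smul_eq_mul, mul_comm] at h1
        exact h1
      rw [IsLocalization.mk'_eq_zero_iff] at h2
      obtain ⟨c, hc⟩ := h2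
      have : i * r = 0 := (mem_nonZeroDivisors_iff.mp c.2).2 _ (by rw [mul_comm]; exact hc)
      rw [smul_eq_mul, mul_comm]
      exact this
    rw [hI, Submodule.mem_bot] at hr
    subst hr
    simp [Submodule.mem_bot]
  -- Step 2: the extension is the whole ring by Kasch.
  have htop : Ideal.map f I = ⊤ := by
    by_contra hne
    exact h _ hne hann
  -- Step 3: extract a finite generating set.
  have h1 : (1 : Q) ∈ Ideal.span (f '' (I : Set R)) := by
    have : (1 : Q) ∈ Ideal.map f I := htop ▸ Submodule.mem_top
    exact this
  obtain ⟨t, hts, h1t⟩ := Submodule.mem_span_finite_of_mem_span h1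
  classical
  obtain ⟨s', hs'I, hs't⟩ := Finset.subset_set_image_iff.mp hts
  refine ⟨Ideal.span (s' : Set R), Ideal.span_le.mpr hs'I, ⟨s', rfl⟩, ?_⟩
  rw [eq_bot_iff]
  intro a ha
  rw [Submodule.mem_annihilator] at ha
  have hfa : f a = 0 := by
    have key : ∀ x ∈ Ideal.span (t : Set Q), f a * x = 0 := by
      intro x hx
      refine Submodule.span_induction ?_ ?_ ?_ ?_ hx
      · intro y hy
        rw [← hs't] at hy
        simp only [Finset.coe_image, Set.mem_image] at hy
        obtain ⟨b, hb, rfl⟩ := hy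
        have : a * b = 0 := ha b (Ideal.subset_span hb)
        rw [← map_mul, this, map_zero]
      · simp
      · intro x y _ _ hx hy
        rw [mul_add, hx, hy, add_zero]
      · intro c x _ hx
        rw [smul_eq_mul, mul_left_comm, hx, mul_zero]
    have := key 1 h1t
    rwa [mul_one] at this
  have : a = 0 := hinj (by rw [hfa, map_zero])
  simp [this]
end

section
/- A commutative ring R is zip if and only if its classical ring of quotients Q_cl(R) is zip. -/
theorem Ideal.exists_fg_le_and_le_map {R S : Type*} [Semiring R] [Semiring S] (f : R →+* S)
    {I : Ideal R} {J : Ideal S} (hJ : J.FG) (hJI : J ≤ I.map f) :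
    ∃ I₀ ≤ I, I₀.FG ∧ J ≤ I₀.map f := by
  classical
  obtain ⟨t, rfl⟩ := hJ
  obtain ⟨T, hTI, htT⟩ := Submodule.subset_span_finite_of_subset_span (Ideal.span_le.mp hJI)
  obtain ⟨u, huI, rfl⟩ := Finset.subset_set_image_iff.mp hTI
  refine ⟨Ideal.span u, Ideal.span_le.mpr huI, ⟨u, rfl⟩, ?_⟩
  rw [Ideal.map_span, Ideal.span_le]
  simpa using htT

namespace IsLocalization

variable {R S : Type*} [CommRing R] [CommRing S] [Algebra R S] {M : Submonoid R}
  [IsLocalization M S]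

include M

theorem comap_eq_bot_iff (hM : M ≤ nonZeroDivisors R) {K : Ideal S} :
    K.comap (algebraMap R S) = ⊥ ↔ K = ⊥ := by
  refine ⟨fun hK => ?_, fun hK => ?_⟩
  · rw [← map_under M S K, Ideal.under, hK, Ideal.map_bot]
  · exact hK ▸ Ideal.comap_bot_of_injective _ (IsLocalization.injective S hM)

theorem comap_annihilator_map (hM : M ≤ nonZeroDivisors R) (I : Ideal R) :
    (Submodule.annihilator (I.map (algebraMap R S))).comap (algebraMap R S) =
      Submodule.annihilator I := by
  ext r
  rw [Ideal.mem_comap, Ideal.map, Ideal.span, Submodule.mem_annihilator_span,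
    Submodule.mem_annihilator]
  simp only [Subtype.forall, Set.forall_mem_image, smul_eq_mul, ← map_mul,
    _root_.map_eq_zero_iff _ (IsLocalization.injective S hM), SetLike.mem_coe]

theorem comap_annihilator (hM : M ≤ nonZeroDivisors R) (J : Ideal S) :
    (Submodule.annihilator J).comap (algebraMap R S) =
      Submodule.annihilator (J.comap (algebraMap R S)) := by
  ext r
  simp only [Ideal.mem_comap, Submodule.mem_annihilator, smul_eq_mul]
  refine ⟨fun hr a ha => IsLocalization.injective S hM ?_, fun hr q hq => ?_⟩
  · rw [map_mul, hr _ ha, map_zero]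
  · obtain ⟨⟨a, s⟩, hqs⟩ := IsLocalization.surj M q
    have ha : algebraMap R S a ∈ J := hqs ▸ J.mul_mem_right _ hq
    have : algebraMap R S r * q * algebraMap R S s = 0 := by
      rw [mul_assoc, hqs, ← map_mul, hr a ha, map_zero]
    exact (IsLocalization.map_units S s).mul_left_eq_zero.mp this

theorem annihilator_map_eq_bot_iff (hM : M ≤ nonZeroDivisors R) {I : Ideal R} :
    Submodule.annihilator (I.map (algebraMap R S)) = ⊥ ↔ Submodule.annihilator I = ⊥ := by
  rw [← comap_eq_bot_iff hM, comap_annihilator_map hM]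

theorem annihilator_eq_bot_iff_comap (hM : M ≤ nonZeroDivisors R) {J : Ideal S} :
    Submodule.annihilator J = ⊥ ↔ Submodule.annihilator (J.comap (algebraMap R S)) = ⊥ := by
  rw [← comap_eq_bot_iff hM, comap_annihilator hM]

theorem isZipRing_iff (hM : M ≤ nonZeroDivisors R) : IsZipRing R ↔ IsZipRing S := by
  constructor
  · intro hR J hJ
    obtain ⟨I₀, hI₀, hfg, hann⟩ :=
      hR (J.comap (algebraMap R S)) ((annihilator_eq_bot_iff_comap hM).mp hJ)
    exact ⟨I₀.map (algebraMap R S), Ideal.map_le_iff_le_comap.mpr hI₀, hfg.map _,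
      (annihilator_map_eq_bot_iff hM).mpr hann⟩
  · intro hS I hI
    obtain ⟨J₀, hJ₀, hfg, hann⟩ :=
      hS (I.map (algebraMap R S)) ((annihilator_map_eq_bot_iff hM).mpr hI)
    obtain ⟨I₀, hI₀, hI₀fg, hJ₀I₀⟩ := Ideal.exists_fg_le_and_le_map _ hfg hJ₀
    refine ⟨I₀, hI₀, hI₀fg, (annihilator_map_eq_bot_iff (S := S) hM).mp ?_⟩
    exact eq_bot_iff.mpr (hann ▸ Submodule.annihilator_mono hJ₀I₀)

end IsLocalization

/-- R is zip iff Q_cl(R) is zip. -/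
theorem isZipRing_iff_isZipRing_fractionRing (R : Type*) [CommRing R] :
    IsZipRing R ↔ IsZipRing (FractionRing R) :=
  IsLocalization.isZipRing_iff le_rfl
end

section
/- Let R be a commutative Bezout domain and let a be a nonzero element of R. Then R/aR is a Kasch ring if and only if every maximal ideal of R containing a is principal. -/
/-!
Whether `R ⧸ J` is Kasch only has to be tested on maximal ideals, and the annihilator of `M ⧸ J`
in `R ⧸ J` is `(J : M) ⧸ J`; so `R ⧸ (a)` is Kasch iff `(a) < (a : M)` for every maximal `M ∋ a`.
If `M = (m)`, then `a / m` lies in `(a : M)` but not in `(a)`. Conversely, if `b ∈ (a : M) \ (a)`,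
then `M ≤ (a : b)`, a proper ideal which in a Bezout domain is generated by `a / gcd a b`; by
maximality `M = (a : b)`.
-/

theorem isKaschRing_iff_forall_isMaximal (S : Type*) [CommRing S] :
    IsKaschRing S ↔ ∀ M : Ideal S, M.IsMaximal → Submodule.annihilator M ≠ ⊥ := by
  refine ⟨fun h M hM => h M hM.ne_top, fun h I hI => ?_⟩
  obtain ⟨M, hM, hIM⟩ := Ideal.exists_le_maximal I hI
  exact ne_bot_of_le_ne_bot (h M hM) (Submodule.annihilator_mono hIM)

namespace Ideal

variable {R : Type*} [CommRing R]

theorem Quotient.mk_mem_annihilator_map_iff {J I : Ideal R} {r : R} :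
    Quotient.mk J r ∈ Submodule.annihilator (I.map (Quotient.mk J)) ↔ r ∈ J.colon I := by
  simp only [map, Submodule.mem_annihilator_span, Submodule.mem_colon, Subtype.forall,
    Set.forall_mem_image, smul_eq_mul, ← map_mul, Quotient.eq_zero_iff_mem]

theorem annihilator_map_mk_ne_bot_iff {J I : Ideal R} :
    Submodule.annihilator (I.map (Quotient.mk J)) ≠ ⊥ ↔ J < J.colon I := by
  simp only [Submodule.ne_bot_iff, SetLike.lt_iff_le_and_exists, le_colon, true_and,
    Quotient.mk_surjective.exists, Quotient.mk_mem_annihilator_map_iff, ne_eq,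
    Quotient.eq_zero_iff_mem]

theorem isKaschRing_quotient_iff (J : Ideal R) :
    IsKaschRing (R ⧸ J) ↔ ∀ M : Ideal R, M.IsMaximal → J ≤ M → J < J.colon M := by
  rw [isKaschRing_iff_forall_isMaximal]
  refine ⟨fun h M hM hJM => ?_, fun h N hN => ?_⟩
  · have := hM.map_of_surjective_of_ker_le Quotient.mk_surjective (mk_ker.trans_le hJM)
    exact annihilator_map_mk_ne_bot_iff.mp (h _ this)
  · have hJN : J ≤ N.comap (Quotient.mk J) := mk_ker.symm.trans_le (ker_le_comap _)
    rw [← map_comap_of_surjective _ Quotient.mk_surjective N]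
    exact annihilator_map_mk_ne_bot_iff.mpr
      (h _ (comap_isMaximal_of_surjective _ Quotient.mk_surjective) hJN)

theorem span_singleton_lt_colon_span_singleton [IsDomain R] {a m : R} (ha : a ≠ 0) (hma : m ∣ a)
    (hm : ¬IsUnit m) :
    span {a} < (span {a}).colon (span {m} : Set R) := by
  obtain ⟨c, rfl⟩ := hma
  refine SetLike.lt_iff_le_and_exists.mpr ⟨le_colon, c, ?_, fun hc => hm ?_⟩
  · rw [mem_colon_span_singleton, mem_span_singleton, mul_comm]
  · rw [mem_span_singleton] at hc
    refine isUnit_of_dvd_one ((mul_dvd_mul_iff_right (right_ne_zero_of_mul ha)).mp ?_)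
    rwa [one_mul]

end Ideal

namespace IsBezout

variable {R : Type*} [CommRing R] [IsDomain R] [IsBezout R]

theorem isPrincipal_colon_singleton (a b : R) :
    ((Ideal.span {a}).colon ({b} : Set R)).IsPrincipal := by
  obtain ⟨u, v, huv⟩ := gcd_eq_sum a b
  obtain ⟨a', ha'⟩ := gcd_dvd_left a b
  obtain ⟨b', hb'⟩ := gcd_dvd_right a b
  set d := gcd a b
  rcases eq_or_ne d 0 with hd | hd
  · rw [hb', hd, zero_mul, Submodule.colon_singleton_zero]
    exact ⟨1, Ideal.span_singleton_one.symm⟩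
  have hcop : IsCoprime a' b' :=
    ⟨u, v, mul_left_cancel₀ hd (by linear_combination huv - u * ha' - v * hb')⟩
  refine ⟨a', Ideal.ext fun x => ?_⟩
  rw [Submodule.mem_colon_singleton, smul_eq_mul, Ideal.mem_span_singleton,
    Ideal.mem_span_singleton, ha', hb', mul_left_comm, mul_dvd_mul_iff_left hd]
  exact ⟨hcop.dvd_of_dvd_mul_right, fun h => h.mul_right b'⟩


theorem exists_eq_span_singleton_of_lt_colon {a : R} {M : Ideal R} (hM : M.IsMaximal)
    (h : Ideal.span {a} < (Ideal.span {a}).colon (M : Set R)) :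
    ∃ m : R, M = Ideal.span {m} := by
  obtain ⟨-, b, hb, hb_notMem⟩ := SetLike.lt_iff_le_and_exists.mp h
  obtain ⟨m, hm⟩ := isPrincipal_colon_singleton a b
  have hMle : M ≤ (Ideal.span {a}).colon {b} := fun x hx => by
    rw [Submodule.mem_colon_singleton, smul_eq_mul, mul_comm]
    exact Submodule.mem_colon.mp hb x hx
  have hne_top : (Ideal.span {a}).colon {b} ≠ ⊤ := by
    rwa [Ne, Submodule.colon_eq_top_iff_subset, Set.singleton_subset_iff]
  exact ⟨m, (hM.eq_of_le hne_top hMle).trans hm⟩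

end IsBezout

/-- For a Bezout domain R and 0 ≠ a, R/aR is Kasch iff every maximal
ideal of R containing a is principal. -/
theorem kasch_quotient_iff_maximal_principal (R : Type*) [CommRing R] [IsDomain R]
    [IsBezout R] (a : R) (ha : a ≠ 0) :
    IsKaschRing (R ⧸ Ideal.span {a}) ↔
      ∀ M : Ideal R, M.IsMaximal → a ∈ M → ∃ m : R, M = Ideal.span {m} := by
  rw [Ideal.isKaschRing_quotient_iff]
  refine forall_congr' fun M => forall_congr' fun hM => ?_
  rw [Ideal.span_singleton_le_iff_mem]
  refine imp_congr_right fun haM => ⟨IsBezout.exists_eq_span_singleton_of_lt_colon hM, ?_⟩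
  rintro ⟨m, rfl⟩
  exact Ideal.span_singleton_lt_colon_span_singleton ha (Ideal.mem_span_singleton.mp haM)
    (fun hu => hM.ne_top (Ideal.span_singleton_eq_top.mpr hu))
end

section
/- A commutative Bezout ring is zip if and only if every dense ideal contains a regular element. -/
theorem Ideal.annihilator_span_singleton_eq_bot_iff {R : Type*} [CommSemiring R] (r : R) :
    Submodule.annihilator (Ideal.span {r}) = ⊥ ↔ r ∈ nonZeroDivisors R := by
  simp only [Submodule.eq_bot_iff, Ideal.span, Submodule.mem_annihilator_span_singleton,
    smul_eq_mul, mem_nonZeroDivisors_iff_right]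

namespace IsZipRing

variable {R : Type*} [CommRing R]

theorem of_forall_exists_mem_nonZeroDivisors
    (h : ∀ I : Ideal R, Submodule.annihilator I = ⊥ → ∃ r ∈ I, r ∈ nonZeroDivisors R) :
    IsZipRing R := by
  intro I hI
  obtain ⟨r, hrI, hr⟩ := h I hI
  exact ⟨Ideal.span {r}, (Ideal.span_singleton_le_iff_mem I).mpr hrI, ⟨{r}, by simp⟩,
    (Ideal.annihilator_span_singleton_eq_bot_iff r).mpr hr⟩

theorem exists_mem_nonZeroDivisors [IsBezout R] (hR : IsZipRing R) {I : Ideal R}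
    (hI : Submodule.annihilator I = ⊥) : ∃ r ∈ I, r ∈ nonZeroDivisors R := by
  obtain ⟨I₀, hle, hfg, hann⟩ := hR I hI
  obtain ⟨r, rfl⟩ := IsBezout.isPrincipal_of_FG I₀ hfg
  exact ⟨r, hle (Ideal.mem_span_singleton_self r),
    (Ideal.annihilator_span_singleton_eq_bot_iff r).mp hann⟩

end IsZipRing

/-- A commutative Bezout ring is zip iff every dense ideal contains a
regular element. -/
theorem isZipRing_iff_dense_ideal_contains_regular (R : Type*) [CommRing R] [IsBezout R] :
    IsZipRing R ↔
      ∀ I : Ideal R, Submodule.annihilator I = ⊥ →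
        ∃ r ∈ I, r ∈ nonZeroDivisors R :=
  ⟨fun hR _ hI => hR.exists_mem_nonZeroDivisors hI,
    IsZipRing.of_forall_exists_mem_nonZeroDivisors⟩
end

section
/- Let R be a semiprime commutative Bezout ring that is a Goldie ring. Then every minimal prime ideal of R is principal, generated by an idempotent, and R has only finitely many minimal prime ideals. -/
/-!
Every element of a minimal prime `P` of a reduced ring is killed by an element outside `P`;
choosing `c ∉ P` with `ann c` maximal (ACC on annihilators) therefore gives `c ∈ ann P \ P`.
Since `ann P ⊓ P = 0` and `ann P ≤ Q` for every other minimal prime `Q`, the ideals `ann P` form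
an independent family of nonzero ideals, so finite Goldie dimension leaves finitely many `P`.
Then prime avoidance gives `a ∈ P` outside all other minimal primes, and for `b ∈ ann P \ P` we
get `a * b = 0` with `ann a ⊓ ann b = 0`. In a Bezout ring `(a, b) = (d)` with `d` regular, and
writing `a = s * d`, `b = t * d`, `d = u * a + v * b` yields `u * s + v * t = 1`, `s * t = 0`:
the idempotent `e = u * s` lies in `P` and `1 - e` in `ann P`, so `P = (e)`.
-/

section

open Ideal

variable {R : Type*} [CommRing R]

lemma AccOnAnnihilators.wellFoundedGT (hacc : AccOnAnnihilators R) :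
    WellFoundedGT {I : Ideal R // ∃ J : Ideal R, I = J.annihilator} := by
  rw [wellFoundedGT_iff_monotone_chain_condition]
  intro f
  obtain ⟨n, hn⟩ := hacc (fun n ↦ (f n).1) (fun _ _ h ↦ f.monotone h) (fun n ↦ (f n).2)
  exact ⟨n, fun m hm ↦ Subtype.ext (hn m hm).symm⟩

lemma Ideal.mem_annihilator_span_singleton_iff {c x : R} :
    x ∈ (span {c}).annihilator ↔ x * c = 0 :=
  Submodule.mem_annihilator_span_singleton c x

lemma annihilator_le_of_mem_minimalPrimes_of_ne {P Q : Ideal R} (hP : P ∈ minimalPrimes R)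
    (hQ : Q ∈ minimalPrimes R) (hne : P ≠ Q) : P.annihilator ≤ Q := by
  obtain ⟨x, hxP, hxQ⟩ :=
    SetLike.not_le_iff_exists.mp fun hle ↦ hne (le_antisymm hle (hQ.2 hP.1 hle))
  intro r hr
  have hrx : r * x = 0 := Submodule.mem_annihilator.mp hr x hxP
  exact (hQ.isPrime.mem_or_mem (hrx ▸ Q.zero_mem)).resolve_right hxQ

lemma exists_mem_forall_notMem_of_mem_minimalPrimes (hfin : (minimalPrimes R).Finite)
    {P : Ideal R} (hP : P ∈ minimalPrimes R) :
    ∃ a ∈ P, ∀ Q ∈ minimalPrimes R, Q ≠ P → a ∉ Q := by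
  have hnot : ¬ (P : Set R) ⊆ ⋃ Q ∈ minimalPrimes R \ {P}, (Q : Set R) := by
    rw [Ideal.subset_union_prime_finite hfin.sdiff P P fun Q hQ _ _ ↦ hQ.1.isPrime]
    rintro ⟨Q, ⟨hQ, hQP⟩, hle⟩
    exact hQP (le_antisymm hle (hQ.2 hP.1 hle)).symm
  obtain ⟨a, ha, hnot⟩ := Set.not_subset.mp hnot
  simp only [Set.mem_iUnion, not_exists] at hnot
  exact ⟨a, ha, fun Q hQ hQP ↦ hnot Q ⟨hQ, hQP⟩⟩

lemma IsBezout.exists_isIdempotentElem_of_mul_eq_zero [IsBezout R] {a b : R} (hab : a * b = 0)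
    (hreg : ∀ x, x * a = 0 → x * b = 0 → x = 0) :
    ∃ e, IsIdempotentElem e ∧ a * e = a ∧ b * e = 0 := by
  obtain ⟨s, hs⟩ := IsBezout.gcd_dvd_left a b
  obtain ⟨t, ht⟩ := IsBezout.gcd_dvd_right a b
  obtain ⟨u, v, huv⟩ := IsBezout.gcd_eq_sum a b
  set d := IsBezout.gcd a b
  have hd : ∀ x, x * d = 0 → x = 0 := fun x hx ↦
    hreg x (by rw [hs, ← mul_assoc, hx, zero_mul]) (by rw [ht, ← mul_assoc, hx, zero_mul])
  have hone : u * s + v * t = 1 := sub_eq_zero.mp <| hd _ <| by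
    linear_combination huv - u * hs - v * ht
  have hst : s * t = 0 := hd _ <| hd _ <| by linear_combination hab - b * hs - d * s * ht
  refine ⟨u * s, ?_, ?_, ?_⟩
  · show u * s * (u * s) = u * s
    linear_combination (u * s) * hone - u * v * hst
  · linear_combination a * hone - v * t * hs - d * v * hst
  · linear_combination d * u * hst + u * s * ht

lemma Ideal.exists_isIdempotentElem_eq_span_of_sup_annihilator_eq_top {I : Ideal R}
    (h : I ⊔ I.annihilator = ⊤) : ∃ e, IsIdempotentElem e ∧ I = span {e} := by
  obtain ⟨e, he, f, hf, hef⟩ := Submodule.mem_sup.mp (h ▸ Submodule.mem_top : (1 : R) ∈ _)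
  have hmul : ∀ x ∈ I, x * e = x := fun x hx ↦ by
    have hfx : f * x = 0 := Submodule.mem_annihilator.mp hf x hx
    linear_combination x * hef - hfx
  refine ⟨e, hmul e he, le_antisymm (fun x hx ↦ ?_) ((span_singleton_le_iff_mem I).mpr he)⟩
  exact mem_span_singleton'.mpr ⟨x, hmul x hx⟩

section Reduced

variable [IsReduced R]

lemma inf_annihilator_eq_bot (I : Ideal R) : I ⊓ I.annihilator = ⊥ := by
  refine eq_bot_iff.mpr fun x ⟨hxI, hx⟩ ↦ ?_
  have hxx : x * x = 0 := Submodule.mem_annihilator.mp hx x hxI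
  exact (Submodule.mem_bot R).mpr (IsReduced.eq_zero x ⟨2, by rwa [pow_two]⟩)

lemma eq_zero_of_forall_mem_minimalPrimes {x : R} (h : ∀ P ∈ minimalPrimes R, x ∈ P) :
    x = 0 := by
  have hx : x ∈ sInf (minimalPrimes R) := Ideal.mem_sInf.mpr fun {_} hP ↦ h _ hP
  rw [Ideal.sInf_minimalPrimes, ← Ideal.zero_eq_bot, ← nilradical, nilradical_eq_zero] at hx
  exact hx

lemma mem_annihilator_iff_forall_mem_minimalPrimes {P : Ideal R} (hP : P ∈ minimalPrimes R)
    {x : R} : x ∈ P.annihilator ↔ ∀ Q ∈ minimalPrimes R, Q ≠ P → x ∈ Q := by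
  refine ⟨fun hx Q hQ hne ↦ annihilator_le_of_mem_minimalPrimes_of_ne hP hQ hne.symm hx,
    fun h ↦ Submodule.mem_annihilator.mpr fun y hy ↦ ?_⟩
  refine eq_zero_of_forall_mem_minimalPrimes fun Q hQ ↦ ?_
  obtain rfl | hne := eq_or_ne Q P
  · exact Q.mul_mem_left x hy
  · exact Q.mul_mem_right y (h Q hQ hne)

lemma exists_notMem_mul_eq_zero_of_mem_minimalPrimes {P : Ideal R} (hP : P ∈ minimalPrimes R)
    {a : R} (ha : a ∈ P) : ∃ s ∉ P, s * a = 0 := by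
  have hPp := hP.isPrime
  let S := Localization.AtPrime P
  have : Ring.KrullDimLE 0 S := Ring.KrullDimLE.of_isLocalization P hP S
  have hmem := (IsLocalization.AtPrime.to_map_mem_maximal_iff S P a).mpr ha
  rw [← Ring.KrullDimLE.isNilpotent_iff_mem_maximalIdeal, isNilpotent_iff_eq_zero,
    IsLocalization.map_eq_zero_iff P.primeCompl] at hmem
  obtain ⟨⟨s, hs⟩, hsa⟩ := hmem
  exact ⟨s, hs, hsa⟩

lemma annihilator_not_le_of_mem_minimalPrimes (hacc : AccOnAnnihilators R)
    {P : Ideal R} (hP : P ∈ minimalPrimes R) : ¬ P.annihilator ≤ P := by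
  have hPp := hP.isPrime
  have := hacc.wellFoundedGT
  let ann : R → {I : Ideal R // ∃ J : Ideal R, I = J.annihilator} :=
    fun s ↦ ⟨(span {s}).annihilator, _, rfl⟩
  obtain ⟨c, hc, hmax⟩ := (InvImage.wf ann wellFounded_gt).has_min {s | s ∉ P}
    ⟨1, (P.ne_top_iff_one).mp hPp.ne_top⟩
  refine fun hle ↦ hc (hle (Submodule.mem_annihilator.mpr fun a ha ↦ ?_))
  obtain ⟨s, hs, hsa⟩ := exists_notMem_mul_eq_zero_of_mem_minimalPrimes hP ha
  have hcs : ann c ≤ ann (c * s) := fun x hx ↦ by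
    rw [mem_annihilator_span_singleton_iff] at hx ⊢
    rw [← mul_assoc, hx, zero_mul]
  have heq : ann c = ann (c * s) := eq_of_le_of_not_lt hcs (hmax _ (hPp.mul_notMem hc hs))
  have ha' : a ∈ (ann (c * s)).1 := by
    rw [mem_annihilator_span_singleton_iff]
    linear_combination c * hsa
  rw [← heq, mem_annihilator_span_singleton_iff] at ha'
  rwa [smul_eq_mul, mul_comm]

lemma HasFiniteGoldieDim.minimalPrimes_finite (hdim : HasFiniteGoldieDim R)
    (hann : ∀ P ∈ minimalPrimes R, P.annihilator ≠ ⊥) : (minimalPrimes R).Finite := by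
  by_contra hinf
  let P := (Set.not_finite.mp hinf).natEmbedding
  refine hdim ⟨fun n ↦ (P n : Ideal R).annihilator, fun n ↦ hann _ (P n).2, fun i ↦ ?_⟩
  have hsup : ⨆ (j) (_ : j ≠ i), (P j : Ideal R).annihilator ≤ P i :=
    iSup₂_le fun j hj ↦ annihilator_le_of_mem_minimalPrimes_of_ne (P j).2 (P i).2
      fun h ↦ hj (P.injective (Subtype.ext h))
  exact (disjoint_iff.mpr (by rw [inf_comm]; exact inf_annihilator_eq_bot _)).mono_right hsup

lemma sup_annihilator_eq_top_of_mem_minimalPrimes [IsBezout R]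
    (hfin : (minimalPrimes R).Finite) {P : Ideal R} (hP : P ∈ minimalPrimes R)
    (hann : ¬ P.annihilator ≤ P) : P ⊔ P.annihilator = ⊤ := by
  have hPp := hP.isPrime
  obtain ⟨b, hb, hbP⟩ := SetLike.not_le_iff_exists.mp hann
  obtain ⟨a, haP, ha⟩ := exists_mem_forall_notMem_of_mem_minimalPrimes hfin hP
  have hann_a : ∀ x, x * a = 0 → x ∈ P.annihilator := fun x hx ↦
    (mem_annihilator_iff_forall_mem_minimalPrimes hP).mpr fun Q hQ hQP ↦
      (hQ.isPrime.mem_or_mem (hx ▸ Q.zero_mem)).resolve_right (ha Q hQ hQP)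
  have hab : a * b = 0 := by rw [mul_comm]; exact Submodule.mem_annihilator.mp hb a haP
  have hreg : ∀ x, x * a = 0 → x * b = 0 → x = 0 := fun x hxa hxb ↦ by
    have hxP : x ∈ P := (hPp.mem_or_mem (hxb ▸ P.zero_mem)).resolve_right hbP
    exact (Submodule.mem_bot R).mp (inf_annihilator_eq_bot P ▸ ⟨hxP, hann_a x hxa⟩)
  obtain ⟨e, -, hae, hbe⟩ := IsBezout.exists_isIdempotentElem_of_mul_eq_zero hab hreg
  have heP : e ∈ P := (hPp.mem_or_mem (hbe ▸ P.zero_mem)).resolve_left hbP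
  have hfP : 1 - e ∈ P.annihilator := hann_a _ (by linear_combination -hae)
  exact (eq_top_iff_one _).mpr (by simpa using Submodule.add_mem_sup heP hfP)

end Reduced

end

/-- In a semiprime commutative Bezout Goldie ring, every minimal prime
is principal generated by an idempotent, and there are only finitely many minimal primes. -/
theorem minimalPrimes_principal_idempotent_and_finite (R : Type*) [CommRing R] [IsBezout R]
    (hsp : nilradical R = 0) (hG : IsGoldieRing R) :
    (∀ P ∈ minimalPrimes R, ∃ e : R, IsIdempotentElem e ∧ P = Ideal.span {e}) ∧
      (minimalPrimes R).Finite := by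
  have : IsReduced R := nilradical_eq_bot_iff.mp hsp
  obtain ⟨hdim, hacc⟩ := hG
  have hann : ∀ P ∈ minimalPrimes R, ¬ P.annihilator ≤ P :=
    fun _ hP ↦ annihilator_not_le_of_mem_minimalPrimes hacc hP
  have hfin : (minimalPrimes R).Finite :=
    hdim.minimalPrimes_finite fun P hP h ↦ hann P hP (h ▸ bot_le)
  exact ⟨fun P hP ↦ Ideal.exists_isIdempotentElem_eq_span_of_sup_annihilator_eq_top
    (sup_annihilator_eq_top_of_mem_minimalPrimes hfin hP (hann P hP)), hfin⟩
end

section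
/- If R is a semiprime commutative Goldie ring, then its classical quotient ring Q_cl(R) is an Artinian von Neumann regular ring with finitely many minimal prime ideals. -/
open Ideal

namespace Ideal

variable {R : Type*} [CommRing R]

@[simp]
lemma mem_annihilator_span_singleton {a y : R} : a ∈ (span {y}).annihilator ↔ a * y = 0 :=
  Submodule.mem_annihilator_span_singleton y a

lemma inf_annihilator_eq_bot [IsReduced R] (I : Ideal R) : I ⊓ I.annihilator = ⊥ := by
  refine eq_bot_iff.2 fun t ⟨htI, htAnn⟩ => ?_
  have hsq : t ^ 2 = 0 := by
    rw [sq]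
    exact Submodule.mem_annihilator.1 htAnn t htI
  exact (Submodule.mem_bot R).2 (IsReduced.eq_zero t ⟨2, hsq⟩)

lemma iSupIndep_span_singleton [IsReduced R] {ι : Type*} {y : ι → R}
    (hy : Pairwise fun i j => y i * y j = 0) : iSupIndep fun i => span {y i} := by
  intro i
  refine Disjoint.mono_right ?_ (disjoint_iff.2 (inf_annihilator_eq_bot (span {y i})))
  refine iSup₂_le fun j hji => span_le.2 ?_
  rintro _ rfl
  exact mem_annihilator_span_singleton.2 (hy hji)

end Ideal

section ArtinianReduced

variable {A : Type*} [CommRing A]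

lemma isArtinianRing_of_isReduced_of_finite_isPrime [IsReduced A]
    (hfin : {I : Ideal A | I.IsPrime}.Finite) (hmax : ∀ I : Ideal A, I.IsPrime → I.IsMaximal) :
    IsArtinianRing A := by
  have : Finite {I : Ideal A | I.IsPrime} := hfin.to_subtype
  have (I : {I : Ideal A | I.IsPrime}) : IsSimpleModule A (A ⧸ I.1) :=
    isSimpleModule_iff_isCoatom.2 (isMaximal_def.1 (hmax I.1 I.2))
  let f : A →ₗ[A] ∀ I : {I : Ideal A | I.IsPrime}, A ⧸ I.1 := LinearMap.pi fun I => I.1.mkQ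
  have hker : LinearMap.ker f = ⊥ := by
    rw [LinearMap.ker_pi]
    simp only [Submodule.ker_mkQ]
    rw [← sInf_eq_iInf', ← nilradical_eq_sInf, nilradical_eq_zero, Submodule.zero_eq_bot]
  exact isArtinian_of_injective f (LinearMap.ker_eq_bot.1 hker)

lemma mul_mul_eq_self_of_pow_succ_mul_eq_pow [IsReduced A] {r y : A} {n : ℕ}
    (h : r ^ (n + 1) * y = r ^ n) : r * y * r = r := by
  have hnil : (r - r * y * r) ^ (n + 1) = 0 := by
    rw [show r - r * y * r = r * (1 - r * y) by ring, mul_pow]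
    linear_combination (-(r * (1 - r * y) ^ n)) * h
  exact (sub_eq_zero.1 (IsReduced.eq_zero _ ⟨n + 1, hnil⟩)).symm

lemma IsArtinianRing.exists_mul_mul_eq_self [IsArtinianRing A] [IsReduced A] (r : A) :
    ∃ y, r * y * r = r := by
  obtain ⟨n, y, h⟩ := IsArtinian.exists_pow_succ_smul_dvd r (1 : A)
  exact ⟨y, mul_mul_eq_self_of_pow_succ_mul_eq_pow (by simpa using h)⟩

end ArtinianReduced

section MaximalAnnihilators

variable (R : Type*) [CommRing R]

def annihilatorsOfNonzero : Set (Ideal R) := {I | ∃ y : R, y ≠ 0 ∧ I = (span {y}).annihilator}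

def maximalAnnihilators : Set (Ideal R) := {P | Maximal (· ∈ annihilatorsOfNonzero R) P}

variable {R}

lemma wellFoundedGT_annihilatorsOfNonzero (hacc : AccOnAnnihilators R) :
    WellFoundedGT (annihilatorsOfNonzero R) :=
  wellFoundedGT_iff_monotone_chain_condition.2 fun f => by
    obtain ⟨n, hn⟩ := hacc (fun n => (f n).1) (fun _ _ h => f.mono h)
      (fun n => ⟨span {(f n).2.choose}, (f n).2.choose_spec.2⟩)
    exact ⟨n, fun m hm => Subtype.ext (hn m hm).symm⟩

lemma exists_le_mem_maximalAnnihilators (hacc : AccOnAnnihilators R) {x : R} (hx : x ≠ 0) :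
    ∃ P ∈ maximalAnnihilators R, (span {x}).annihilator ≤ P := by
  have := wellFoundedGT_annihilatorsOfNonzero hacc
  let x' : annihilatorsOfNonzero R := ⟨_, x, hx, rfl⟩
  obtain ⟨P, hxP, hmax⟩ := wellFounded_gt.has_min {I | x' ≤ I} ⟨x', le_refl x'⟩
  refine ⟨P.1, ⟨P.2, fun I hI hPI => ?_⟩, hxP⟩
  exact not_lt_iff_le_imp_ge.1 (hmax ⟨I, hI⟩ (hxP.trans hPI)) hPI

lemma isPrime_of_mem_maximalAnnihilators {P : Ideal R} (hP : P ∈ maximalAnnihilators R) :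
    P.IsPrime := by
  obtain ⟨⟨y, hy, rfl⟩, hmax⟩ := hP
  refine ⟨fun h => hy ?_, fun {a b} hab => or_iff_not_imp_right.2 fun hb => ?_⟩
  · simpa using (eq_top_iff_one _).1 h
  simp only [mem_annihilator_span_singleton] at hab hb ⊢
  have hle : (span {y}).annihilator ≤ (span {b * y}).annihilator := fun c hc => by
    simp only [mem_annihilator_span_singleton] at hc ⊢
    rw [mul_left_comm, hc, mul_zero]
  exact mem_annihilator_span_singleton.1
    (hmax ⟨b * y, hb, rfl⟩ hle (mem_annihilator_span_singleton.2 (by rw [← mul_assoc, hab])))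

lemma mul_eq_zero_of_mem_maximalAnnihilators {y z : R}
    (hy : (span {y}).annihilator ∈ maximalAnnihilators R)
    (hz : (span {z}).annihilator ∈ maximalAnnihilators R)
    (hne : (span {y}).annihilator ≠ (span {z}).annihilator) : y * z = 0 := by
  by_contra hyz
  have hle_y : (span {y}).annihilator ≤ (span {y * z}).annihilator := fun c hc => by
    simp only [mem_annihilator_span_singleton] at hc ⊢
    rw [← mul_assoc, hc, zero_mul]
  have hle_z : (span {z}).annihilator ≤ (span {y * z}).annihilator := fun c hc => by
    simp only [mem_annihilator_span_singleton] at hc ⊢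
    rw [mul_left_comm, hc, mul_zero]
  exact hne ((Maximal.eq_of_le (P := (· ∈ annihilatorsOfNonzero R)) hy ⟨_, hyz, rfl⟩ hle_y).trans
    (Maximal.eq_of_le (P := (· ∈ annihilatorsOfNonzero R)) hz ⟨_, hyz, rfl⟩ hle_z).symm)

lemma maximalAnnihilators_finite [IsReduced R] (hdim : HasFiniteGoldieDim R) :
    (maximalAnnihilators R).Finite := by
  by_contra hinf
  let e := Set.Infinite.natEmbedding _ hinf
  choose y hy hPy using fun n => (e n).2.1
  refine hdim ⟨fun n => span {y n}, fun n => by simpa using hy n,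
    iSupIndep_span_singleton fun m n hmn => ?_⟩
  refine mul_eq_zero_of_mem_maximalAnnihilators (hPy m ▸ (e m).2) (hPy n ▸ (e n).2) ?_
  rw [← hPy m, ← hPy n]
  exact fun h => hmn (e.injective (Subtype.ext h))

lemma exists_mem_maximalAnnihilators_of_notMem_nonZeroDivisors (hacc : AccOnAnnihilators R)
    {x : R} (hx : x ∉ nonZeroDivisors R) : ∃ P ∈ maximalAnnihilators R, x ∈ P := by
  obtain ⟨y, hxy, hy⟩ := not_forall₂.1 (mt mem_nonZeroDivisors_iff_right.2 hx)
  obtain ⟨P, hP, hle⟩ := exists_le_mem_maximalAnnihilators hacc hy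
  exact ⟨P, hP, hle (by simpa [mul_comm] using hxy)⟩

lemma eq_annihilator_of_isPrime_of_le [IsReduced R] {p : Ideal R} [p.IsPrime] {y : R}
    (hy : y ≠ 0) (hle : p ≤ (span {y}).annihilator) : p = (span {y}).annihilator := by
  have hyp : y ∉ p := fun hyp =>
    hy (IsReduced.eq_zero y ⟨2, by simpa [sq] using hle hyp⟩)
  refine hle.antisymm fun a ha => ?_
  have hay : a * y ∈ p := by simp only [mem_annihilator_span_singleton.1 ha, zero_mem]
  exact (‹p.IsPrime›.mem_or_mem hay).resolve_right hyp

lemma mem_maximalAnnihilators_of_isPrime_of_disjoint [IsReduced R] (hG : IsGoldieRing R)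
    {p : Ideal R} [p.IsPrime] (hp : Disjoint (nonZeroDivisors R : Set R) p) :
    p ∈ maximalAnnihilators R := by
  have hfin := maximalAnnihilators_finite hG.1
  have hsub : (p : Set R) ⊆ ⋃ P ∈ maximalAnnihilators R, (P : Set R) := fun x hx => by
    obtain ⟨P, hP, hxP⟩ :=
      exists_mem_maximalAnnihilators_of_notMem_nonZeroDivisors hG.2 (hp.notMem_of_mem_right hx)
    exact Set.mem_biUnion hP hxP
  obtain ⟨P, hP, hpP⟩ := (subset_union_prime_finite hfin (f := id) ⊥ ⊥
    fun P hP _ _ => isPrime_of_mem_maximalAnnihilators hP).1 hsub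
  obtain ⟨y, hy, rfl⟩ := hP.1
  rwa [eq_annihilator_of_isPrime_of_le hy hpP]

end MaximalAnnihilators

namespace IsFractionRing

variable {R Q : Type*} [CommRing R] [IsReduced R] [CommRing Q] [Algebra R Q] [IsFractionRing R Q]

lemma under_mem_maximalAnnihilators (hG : IsGoldieRing R) (q : Ideal Q) [hq : q.IsPrime] :
    q.under R ∈ maximalAnnihilators R := by
  obtain ⟨_, hdisj⟩ := (IsLocalization.isPrime_iff_isPrime_disjoint (nonZeroDivisors R) Q q).1 hq
  exact mem_maximalAnnihilators_of_isPrime_of_disjoint hG hdisj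

lemma setOf_isPrime_finite (hG : IsGoldieRing R) : {q : Ideal Q | q.IsPrime}.Finite := by
  refine ((maximalAnnihilators_finite hG.1).image (Ideal.map (algebraMap R Q))).subset
    fun q (hq : q.IsPrime) => ⟨q.under R, under_mem_maximalAnnihilators hG q, ?_⟩
  exact IsLocalization.map_under (nonZeroDivisors R) Q q

lemma isMaximal_of_isPrime (hG : IsGoldieRing R) (q : Ideal Q) [q.IsPrime] : q.IsMaximal := by
  obtain ⟨m, hm, hqm⟩ := q.exists_le_maximal IsPrime.ne_top'
  have hP := under_mem_maximalAnnihilators hG q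
  have hP' := under_mem_maximalAnnihilators hG m
  have hunder : q.under R = m.under R :=
    Maximal.eq_of_le (P := (· ∈ annihilatorsOfNonzero R)) hP hP'.1 (Ideal.comap_mono hqm)
  rwa [← IsLocalization.map_under (nonZeroDivisors R) Q q, hunder,
    IsLocalization.map_under (nonZeroDivisors R) Q m]

lemma isArtinianRing_of_isGoldieRing (hG : IsGoldieRing R) : IsArtinianRing Q :=
  have : IsReduced Q := isReduced_of_injective (FractionRing.algEquiv R Q).symm.toRingHom
    (FractionRing.algEquiv R Q).symm.injective
  isArtinianRing_of_isReduced_of_finite_isPrime (setOf_isPrime_finite hG)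
    fun q _ => isMaximal_of_isPrime hG q

end IsFractionRing

/-- If R is a semiprime commutative Goldie ring, then Q_cl(R) is an
Artinian von Neumann regular ring with finitely many minimal primes. -/
theorem fractionRing_artinian_vnr_of_semiprime_goldie (R : Type*) [CommRing R]
    (hsp : nilradical R = 0) (hG : IsGoldieRing R) :
    IsArtinianRing (FractionRing R) ∧
      (∀ x : FractionRing R, ∃ y : FractionRing R, x * y * x = x) ∧
      (minimalPrimes (FractionRing R)).Finite := by
  have : IsReduced R := nilradical_eq_bot_iff.1 hsp
  have : IsArtinianRing (FractionRing R) := IsFractionRing.isArtinianRing_of_isGoldieRing hG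
  exact ⟨this, IsArtinianRing.exists_mul_mul_eq_self,
    (IsFractionRing.setOf_isPrime_finite hG).subset fun p hp => hp.1.1⟩
end

section
/- Let R be a commutative Bezout domain and let a be an almost zip element of R (i.e., R/rad(aR) is a zip ring, where rad(aR) is the radical of the ideal aR). Then there are only finitely many prime ideals of R minimal over aR. -/
/-! In a reduced ring, an ideal contained in no minimal prime has zero annihilator, whereas a
finitely generated ideal inside a minimal prime `q` is killed by an element outside `q`, because
the localization at `q` is a field. If there were infinitely many minimal primes, the zip property,
applied to `q` when `ann q = 0` and otherwise to `⨆ q, ann q`, would give a finitely generated ideal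
with zero annihilator inside some minimal prime: it lies in the sum of finitely many `ann q`, and
these are contained in every other minimal prime. The minimal primes over `aR` are those of the
reduced ring `R ⧸ rad(aR)`. -/

open Submodule

section

variable {R : Type*} [CommRing R]

theorem Ideal.exists_notMem_mul_eq_zero_of_mem_minimalPrimes [IsReduced R] {q : Ideal R}
    (hq : q ∈ minimalPrimes R) {x : R} (hx : x ∈ q) : ∃ y ∉ q, y * x = 0 := by
  have := hq.1.1
  have : Ring.KrullDimLE 0 (Localization.AtPrime q) := .of_isLocalization q hq _
  -- `R_q` is reduced of dimension zero, so its maximal ideal vanishes.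
  have hxL : algebraMap R (Localization.AtPrime q) x = 0 := by
    have := (IsLocalization.AtPrime.to_map_mem_maximal_iff (Localization.AtPrime q) q x).mpr hx
    rwa [← Ring.KrullDimLE.nilradical_eq_maximalIdeal, nilradical_eq_zero] at this
  obtain ⟨⟨y, hy⟩, hyx⟩ := (IsLocalization.map_eq_zero_iff q.primeCompl _ x).mp hxL
  exact ⟨y, hy, hyx⟩

theorem annihilator_not_le_of_fg_of_le_of_mem_minimalPrimes [IsReduced R] {q : Ideal R}
    (hq : q ∈ minimalPrimes R) {I : Ideal R} (hI : I.FG) (hIq : I ≤ q) :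
    ¬ annihilator I ≤ q := by
  have := hq.1.1
  induction I, hI using Submodule.fg_induction with
  | singleton x =>
    obtain ⟨y, hyq, hyx⟩ :=
      Ideal.exists_notMem_mul_eq_zero_of_mem_minimalPrimes hq (hIq (mem_span_singleton_self x))
    exact fun h => hyq (h ((mem_annihilator_span_singleton x y).mpr hyx))
  | sup I J _ _ ihI ihJ =>
    rw [annihilator_sup, Ideal.IsPrime.inf_le ‹_›, not_or]
    exact ⟨ihI (le_sup_left.trans hIq), ihJ (le_sup_right.trans hIq)⟩

theorem annihilator_le_of_not_le {p q : Ideal R} [p.IsPrime] (h : ¬ q ≤ p) :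
    annihilator q ≤ p :=
  ((Ideal.IsPrime.mul_le ‹_›).mp (annihilator_mul q ▸ bot_le)).resolve_right h

theorem annihilator_eq_bot_of_annihilator_le_self [IsReduced R] {I : Ideal R}
    (h : annihilator I ≤ I) : annihilator I = ⊥ := by
  refine eq_bot_iff.mpr fun x hx => ?_
  have hxx : x * x = 0 := mem_annihilator.mp hx x (h hx)
  exact IsReduced.eq_zero x ⟨2, by rw [sq, hxx]⟩

theorem annihilator_eq_bot_of_forall_not_le_minimalPrimes [IsReduced R] {I : Ideal R}
    (h : ∀ q ∈ minimalPrimes R, ¬ I ≤ q) : annihilator I = ⊥ := by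
  refine eq_bot_iff.mpr fun x hx => ?_
  have hnil : x ∈ (⊥ : Ideal R).radical := by
    rw [← Ideal.sInf_minimalPrimes]
    refine Submodule.mem_sInf.mpr fun q hq => ?_
    have := hq.1.1
    exact annihilator_le_of_not_le (h q hq) hx
  obtain ⟨n, hn⟩ := hnil
  exact IsReduced.eq_zero x ⟨n, hn⟩

theorem exists_mem_minimalPrimes_le_of_fg_le_iSup_annihilator
    (hinf : (minimalPrimes R).Infinite) {I : Ideal R} (hI : I.FG)
    (hle : I ≤ ⨆ q : minimalPrimes R, annihilator (q : Ideal R)) :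
    ∃ q ∈ minimalPrimes R, I ≤ q := by
  classical
  obtain ⟨t, ht⟩ :=
    CompleteLattice.IsCompactElement.exists_finset_of_le_iSup _
      ((Submodule.fg_iff_compact I).mp hI) _ hle
  obtain ⟨q, hq, hqt⟩ := hinf.exists_notMem_finset (t.image Subtype.val)
  have := hq.1.1
  refine ⟨q, hq, ht.trans (iSup₂_le fun p hp => annihilator_le_of_not_le fun hpq => ?_)⟩
  have heq : (p : Ideal R) = q := le_antisymm hpq (hq.2 p.2.1 hpq)
  exact hqt (Finset.mem_image.mpr ⟨p, hp, heq⟩)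

theorem IsZipRing.exists_fg_le_forall_not_le_minimalPrimes [IsReduced R] (hz : IsZipRing R)
    {I : Ideal R} (hI : annihilator I = ⊥) :
    ∃ I₀ ≤ I, I₀.FG ∧ ∀ q ∈ minimalPrimes R, ¬ I₀ ≤ q := by
  obtain ⟨I₀, hI₀I, hI₀, hann⟩ := hz I hI
  exact ⟨I₀, hI₀I, hI₀, fun q hq hI₀q =>
    annihilator_not_le_of_fg_of_le_of_mem_minimalPrimes hq hI₀ hI₀q (hann ▸ bot_le)⟩

theorem IsZipRing.minimalPrimes_finite [IsReduced R] (hz : IsZipRing R) :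
    (minimalPrimes R).Finite := by
  by_contra hinf
  by_cases hzero : ∃ q ∈ minimalPrimes R, annihilator q = ⊥
  · obtain ⟨q, hq, hann⟩ := hzero
    obtain ⟨I₀, hI₀q, -, hI₀⟩ := hz.exists_fg_le_forall_not_le_minimalPrimes hann
    exact hI₀ q hq hI₀q
  push Not at hzero
  set I := ⨆ q : minimalPrimes R, annihilator (q : Ideal R)
  have hI : annihilator I = ⊥ := annihilator_eq_bot_of_forall_not_le_minimalPrimes
    fun q hq hIq => hzero q hq <| annihilator_eq_bot_of_annihilator_le_self <|
      (le_iSup (fun p : minimalPrimes R => annihilator (p : Ideal R)) ⟨q, hq⟩).trans hIq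
  obtain ⟨I₀, hI₀I, hfg, hI₀⟩ := hz.exists_fg_le_forall_not_le_minimalPrimes hI
  obtain ⟨q, hq, hI₀q⟩ := exists_mem_minimalPrimes_le_of_fg_le_iSup_annihilator hinf hfg hI₀I
  exact hI₀ q hq hI₀q

theorem Ideal.minimalPrimes_finite_of_isZipRing_quotient_radical {I : Ideal R}
    (hz : IsZipRing (R ⧸ I.radical)) : I.minimalPrimes.Finite := by
  have : IsReduced (R ⧸ I.radical) :=
    (Ideal.isRadical_iff_quotient_reduced _).mp (Ideal.radical_isRadical I)
  rw [← Ideal.radical_minimalPrimes, Ideal.minimalPrimes_eq_comap]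
  exact hz.minimalPrimes_finite.image _

end

theorem minimalPrimes_finite_of_almost_zip_element_general (R : Type*) [CommRing R]
    (a : R)
    (hz : IsZipRing (R ⧸ (Ideal.span {a} : Ideal R).radical)) :
    (Ideal.span {a} : Ideal R).minimalPrimes.Finite :=
  Ideal.minimalPrimes_finite_of_isZipRing_quotient_radical hz

/-- If a is an almost zip element of a Bezout domain R, then there are
only finitely many primes minimal over aR. -/
theorem minimalPrimes_finite_of_almost_zip_element (R : Type*) [CommRing R] [IsDomain R]
    [IsBezout R] (a : R) (ha : a ≠ 0) (hu : ¬ IsUnit a)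
    (hz : IsZipRing (R ⧸ (Ideal.span {a} : Ideal R).radical)) :
    (Ideal.span {a} : Ideal R).minimalPrimes.Finite :=
  minimalPrimes_finite_of_almost_zip_element_general R a hz
end

section
/- Every almost zip commutative Bezout domain is fractionally regular: for every nonzero nonunit a, the classical quotient ring Q_cl(R/rad(aR)) is von Neumann regular. -/
/-- In a reduced zip Bezout ring, the classical quotient ring is von Neumann regular. -/
lemma vnr_of_reduced_zip_bezout (S : Type*) [CommRing S] [IsReduced S] [IsBezout S]
    (hzip : IsZipRing S) (x : FractionRing S) : ∃ y, x * y * x = x := by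
  set φ : S →+* FractionRing S := algebraMap S (FractionRing S) with hφ
  obtain ⟨⟨s, t⟩, hx⟩ := IsLocalization.surj (nonZeroDivisors S) x
  set J : Ideal S := Ideal.span {s} ⊔ Submodule.annihilator (Ideal.span {s}) with hJdef
  have hJ : Submodule.annihilator J = ⊥ := by
    rw [Submodule.eq_bot_iff]
    intro c hc
    rw [Submodule.mem_annihilator] at hc
    have hcs : c ∈ Submodule.annihilator (Ideal.span {s} : Ideal S) := by
      rw [Submodule.mem_annihilator]
      exact fun m hm => hc m (Ideal.mem_sup_left hm)
    have hcc : c * c = 0 := by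
      have := hc c (Ideal.mem_sup_right hcs)
      simpa using this
    exact IsReduced.eq_zero c ⟨2, by rwa [pow_two]⟩
  obtain ⟨I₀, hI₀J, hfg, hann⟩ := hzip J hJ
  obtain ⟨d, hd⟩ := (IsBezout.isPrincipal_of_FG I₀ hfg).1
  have hdI₀ : d ∈ I₀ := hd ▸ Ideal.subset_span rfl
  have hdnzd : d ∈ nonZeroDivisors S := by
    rw [mem_nonZeroDivisors_iff_right]
    intro z hz
    have hz' : z ∈ Submodule.annihilator I₀ := by
      rw [hd, Submodule.mem_annihilator]
      intro m hm
      obtain ⟨c, rfl⟩ := Ideal.mem_span_singleton'.mp hm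
      calc z • (c * d) = c * (z * d) := by rw [smul_eq_mul]; ring
        _ = 0 := by rw [hz, mul_zero]
    rw [hann] at hz'
    simpa using hz'
  obtain ⟨d₁, hd₁, b, hb, hsum⟩ := Submodule.mem_sup.mp (hI₀J hdI₀)
  obtain ⟨c, hc⟩ := Ideal.mem_span_singleton'.mp hd₁
  have hbs : b * s = 0 := by
    have := Submodule.mem_annihilator.mp hb s (Ideal.subset_span rfl)
    simpa using this
  have hud : IsUnit (φ d) := IsLocalization.map_units (FractionRing S) ⟨d, hdnzd⟩
  have hut : IsUnit (φ (t : S)) := IsLocalization.map_units (FractionRing S) t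
  obtain ⟨v, hv⟩ := hud.exists_right_inv
  obtain ⟨w, hw⟩ := hut.exists_right_inv
  have hxs : x = φ s * w := by
    calc x = x * (φ (t : S) * w) := by rw [hw, mul_one]
      _ = φ s * w := by rw [← mul_assoc, hx]
  have key : s * c * s = s * d := by
    have : s * d = s * c * s + b * s := by rw [← hsum, ← hc]; ring
    rw [this, hbs, add_zero]
  refine ⟨φ c * v * φ (t : S), ?_⟩
  rw [hxs]
  calc φ s * w * (φ c * v * φ (t : S)) * (φ s * w)
      = φ (s * c * s) * v * w * (φ (t : S) * w) := by
        simp only [map_mul]; ring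
    _ = φ (s * d) * v * w := by rw [hw, mul_one, key]
    _ = φ s * w * (φ d * v) := by simp only [map_mul]; ring
    _ = φ s * w := by rw [hv, mul_one]

/-- Every almost zip Bezout domain is fractionally regular. -/
theorem fractionally_regular_of_almost_zip (R : Type*) [CommRing R] [IsDomain R] [IsBezout R]
    (h : ∀ a : R, a ≠ 0 → ¬ IsUnit a →
      IsZipRing (R ⧸ (Ideal.span {a} : Ideal R).radical)) :
    ∀ a : R, a ≠ 0 → ¬ IsUnit a →
      ∀ x : FractionRing (R ⧸ (Ideal.span {a} : Ideal R).radical),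
        ∃ y, x * y * x = x := by
  intro a ha hau x
  haveI : IsReduced (R ⧸ (Ideal.span {a} : Ideal R).radical) := by
    refine (RingHom.ker_isRadical_iff_reduced_of_surjective
      (Ideal.Quotient.mk_surjective (I := (Ideal.span {a} : Ideal R).radical))).mp ?_
    rw [Ideal.mk_ker]
    exact Ideal.radical_isRadical _
  haveI : IsBezout (R ⧸ (Ideal.span {a} : Ideal R).radical) :=
    Function.Surjective.isBezout (Ideal.Quotient.mk _) Ideal.Quotient.mk_surjective
  exact vnr_of_reduced_zip_bezout _ (h a ha hau) x
end

section
/- Let R be a commutative domain in which every nonzero principal ideal has only finitely many minimal prime ideals. Then R is fractionally regular: for every nonzero nonunit a ∈ R, the classical quotient ring Q_cl(R/rad(aR)) is von Neumann regular. -/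
/-!
Modulo `rad(aR)` the ring is reduced, and its minimal primes are the images of the finitely many
minimal primes over `aR`. In a reduced ring `S` with finitely many minimal primes, prime avoidance
gives, for each `r`, an element `j` lying in exactly those minimal primes that do not contain `r`.
Then `r * j` lies in every minimal prime, so `r * j = 0`, while `r + j` lies in none, so it is a
non-zerodivisor. In `Q_cl(S)` the unit `u = r + j` satisfies `r * u⁻¹ * r = r`, and every element
of `Q_cl(S)` is such an `r` times a unit.
-/

def IsVonNeumannRegular (Q : Type*) [Mul Q] : Prop :=
  ∀ x : Q, ∃ y, x * y * x = x

theorem Ideal.exists_forall_mem_iff_notMem_of_minimalPrimes_finite {R : Type*} [CommRing R]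
    {I : Ideal R} (hfin : I.minimalPrimes.Finite) (A : Set (Ideal R)) :
    ∃ j : R, ∀ p ∈ I.minimalPrimes, j ∈ p ↔ p ∉ A := by
  classical
  have hBfin : (I.minimalPrimes \ A).Finite := hfin.sdiff
  set J : Ideal R := hBfin.toFinset.inf id
  have hJ_le : ∀ q ∈ I.minimalPrimes \ A, J ≤ q := fun q hq =>
    Finset.inf_le (f := id) (hBfin.mem_toFinset.mpr hq)
  -- by minimality, a prime of `A` containing `J` would contain, hence equal, a prime outside `A`
  have hJ_not_le : ∀ p ∈ I.minimalPrimes ∩ A, ¬ J ≤ p := by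
    rintro p ⟨hp, hpA⟩ hJp
    obtain ⟨q, hq, hqp⟩ := (hp.1.1.inf_le' (s := hBfin.toFinset) (f := id)).mp hJp
    obtain ⟨hq, hqA⟩ := hBfin.mem_toFinset.mp hq
    have hq_eq : q = p := le_antisymm hqp (hp.2 hq.1 hqp)
    exact hqA (hq_eq ▸ hpA)
  obtain ⟨j, hjJ, hj⟩ : ∃ j ∈ (J : Set R), j ∉ ⋃ p ∈ I.minimalPrimes ∩ A, (p : Set R) := by
    rw [← Set.not_subset, Ideal.subset_union_prime_finite (hfin.subset Set.inter_subset_left)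
      ⊥ ⊥ (fun p hp _ _ => hp.1.1.1)]
    exact fun ⟨p, hp, hJp⟩ => hJ_not_le p hp hJp
  refine ⟨j, fun p hp => ⟨fun hjp hpA => hj (Set.mem_biUnion ⟨hp, hpA⟩ hjp),
    fun hpA => hJ_le p ⟨hp, hpA⟩ hjJ⟩⟩

theorem eq_zero_of_forall_mem_minimalPrimes_s13 {S : Type*} [CommRing S] [IsReduced S] {z : S}
    (hz : ∀ p ∈ minimalPrimes S, z ∈ p) : z = 0 := by
  have hz_nil : z ∈ nilradical S := by
    rw [nilradical, Submodule.zero_eq_bot, ← Ideal.sInf_minimalPrimes]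
    exact Ideal.mem_sInf.mpr fun {p} hp => hz p hp
  exact (mem_nilradical.mp hz_nil).eq_zero

theorem mem_nonZeroDivisors_of_forall_notMem_minimalPrimes {S : Type*} [CommRing S]
    [IsReduced S] {t : S} (ht : ∀ p ∈ minimalPrimes S, t ∉ p) : t ∈ nonZeroDivisors S :=
  mem_nonZeroDivisors_iff_right.mpr fun _ hz => eq_zero_of_forall_mem_minimalPrimes_s13 fun p hp =>
    ((hp.1.1.mem_or_mem (hz ▸ p.zero_mem)).resolve_right (ht p hp))

theorem exists_mul_eq_zero_add_mem_nonZeroDivisors {S : Type*} [CommRing S] [IsReduced S]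
    (hfin : (minimalPrimes S).Finite) (r : S) :
    ∃ j : S, r * j = 0 ∧ r + j ∈ nonZeroDivisors S := by
  obtain ⟨j, hj⟩ := Ideal.exists_forall_mem_iff_notMem_of_minimalPrimes_finite hfin {p | r ∈ p}
  refine ⟨j, eq_zero_of_forall_mem_minimalPrimes_s13 fun p hp => ?_,
    mem_nonZeroDivisors_of_forall_notMem_minimalPrimes fun p hp hrj => ?_⟩
  · by_cases hr : r ∈ p
    · exact p.mul_mem_right j hr
    · exact p.mul_mem_left r ((hj p hp).mpr hr)
  · have hr_iff : r ∈ p ↔ j ∈ p := ⟨fun hr => (p.add_mem_iff_right hr).mp hrj,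
      fun hjp => (p.add_mem_iff_left hjp).mp hrj⟩
    exact iff_not_self (hr_iff.trans (hj p hp))

theorem IsLocalization.isVonNeumannRegular_of_exists_mul_eq_zero_add_mem {S Q : Type*}
    [CommRing S] [CommRing Q] [Algebra S Q] (M : Submonoid S) [IsLocalization M Q]
    (h : ∀ r : S, ∃ j : S, r * j = 0 ∧ r + j ∈ M) : IsVonNeumannRegular Q := by
  intro x
  obtain ⟨r, s, rfl⟩ := IsLocalization.exists_mk'_eq M x
  obtain ⟨j, hrj, hM⟩ := h r
  set f := algebraMap S Q
  obtain ⟨w, hw⟩ := IsLocalization.map_units Q ⟨r + j, hM⟩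
  have hrj' : f r * f j = 0 := by rw [← map_mul, hrj, map_zero]
  have hs : mk' Q (1 : S) s * f s = 1 := by rw [mul_comm, mk'_spec', map_one]
  have hw' : (f r + f j) * (w⁻¹ : Qˣ) = 1 := by rw [← map_add, ← hw]; exact w.mul_inv
  refine ⟨f s * (w⁻¹ : Qˣ), ?_⟩
  -- `x = f r * mk' 1 s`, where `mk' 1 s` inverts `f s` and `f r * w⁻¹ * f r = f r`
  rw [mk'_eq_mul_mk'_one]
  linear_combination (f r * (w⁻¹ : Qˣ) * f r * mk' Q (1 : S) s) * hs
    + mk' Q (1 : S) s * (f r * hw' - (w⁻¹ : Qˣ) * hrj')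

theorem Ideal.finite_minimalPrimes_quotient {R : Type*} [CommRing R] {I : Ideal R}
    (h : I.minimalPrimes.Finite) : (minimalPrimes (R ⧸ I)).Finite := by
  rw [Ideal.minimalPrimes_eq_comap] at h
  exact h.of_finite_image
    (Ideal.comap_injective_of_surjective _ Ideal.Quotient.mk_surjective).injOn

theorem isVonNeumannRegular_fractionRing_of_finite_minimalPrimes {S : Type*} [CommRing S]
    [IsReduced S] (hfin : (minimalPrimes S).Finite) : IsVonNeumannRegular (FractionRing S) :=
  IsLocalization.isVonNeumannRegular_of_exists_mul_eq_zero_add_mem _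
    (exists_mul_eq_zero_add_mem_nonZeroDivisors hfin)

theorem fractionally_regular_of_finitely_many_minimal_primes_general (R : Type*) [CommRing R]
    (h : ∀ a : R, a ≠ 0 → (Ideal.span {a} : Ideal R).minimalPrimes.Finite) :
    ∀ a : R, a ≠ 0 → ¬ IsUnit a →
      ∀ x : FractionRing (R ⧸ (Ideal.span {a} : Ideal R).radical),
        ∃ y, x * y * x = x := by
  intro a ha _
  have : IsReduced (R ⧸ (Ideal.span {a}).radical) :=
    (Ideal.isRadical_iff_quotient_reduced _).mp (Ideal.radical_isRadical _)
  apply isVonNeumannRegular_fractionRing_of_finite_minimalPrimes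
  apply Ideal.finite_minimalPrimes_quotient
  rw [Ideal.radical_minimalPrimes]
  exact h a ha

/-- A commutative domain in which every nonzero principal ideal has
finitely many minimal primes is fractionally regular. -/
theorem fractionally_regular_of_finitely_many_minimal_primes (R : Type*) [CommRing R]
    [IsDomain R]
    (h : ∀ a : R, a ≠ 0 → (Ideal.span {a} : Ideal R).minimalPrimes.Finite) :
    ∀ a : R, a ≠ 0 → ¬ IsUnit a →
      ∀ x : FractionRing (R ⧸ (Ideal.span {a} : Ideal R).radical),
        ∃ y, x * y * x = x :=
  fractionally_regular_of_finitely_many_minimal_primes_general R h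
end

section
/- Let R be a commutative ring and e an idempotent of the classical quotient ring Q_cl(R) such that R is arithmetical (its lattice of ideals is distributive). Then e ∈ R. -/
/-!
Write `e = a / s`. Idempotency gives `a (s - a) = 0`, so every element of `(a) ∩ (s - a)` kills
the non-zerodivisor `s` and the intersection is zero. Distributivity then yields
`a ∈ (a) ∩ ((s) + (s - a)) = (a) ∩ (s) + (a) ∩ (s - a) = (a) ∩ (s)`, so `a = t s` and `e = t`.
-/

open Ideal nonZeroDivisors

section

variable {R : Type*} [CommRing R]

theorem span_singleton_inf_span_singleton_eq_bot_of_mul_eq_zero {a b : R} (hab : a * b = 0)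
    (hs : a + b ∈ R⁰) : span {a} ⊓ span {b} = ⊥ := by
  refine eq_bot_iff.mpr fun v ⟨hva, hvb⟩ => ?_
  obtain ⟨x, rfl⟩ := mem_span_singleton'.mp hva
  obtain ⟨y, hy⟩ := mem_span_singleton'.mp hvb
  have : x * a * (a + b) = 0 := by
    linear_combination (x + y) * hab - a * hy
  exact (mul_right_mem_nonZeroDivisors_eq_zero_iff hs).mp this

theorem mem_span_singleton_add_of_mul_eq_zero
    (harith : ∀ I J K : Ideal R, I ⊓ (J ⊔ K) = (I ⊓ J) ⊔ (I ⊓ K))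
    {a b : R} (hab : a * b = 0) (hs : a + b ∈ R⁰) : a ∈ span {a + b} := by
  have ha : a ∈ span {a} ⊓ (span {a + b} ⊔ span {b}) := by
    refine ⟨mem_span_singleton_self a, ?_⟩
    simpa using sub_mem (mem_sup_left (mem_span_singleton_self (a + b)))
      (mem_sup_right (mem_span_singleton_self b) : b ∈ span {a + b} ⊔ span {b})
  rw [harith, span_singleton_inf_span_singleton_eq_bot_of_mul_eq_zero hab hs, sup_bot_eq] at ha
  exact ha.2

theorem IsFractionRing.mul_sub_eq_zero_of_isIdempotentElem_mk' (K : Type*) [CommRing K]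
    [Algebra R K] [IsFractionRing R K] {a : R} {s : R⁰}
    (he : IsIdempotentElem (IsLocalization.mk' K a s)) : a * (s - a) = 0 := by
  rw [IsIdempotentElem, ← IsLocalization.mk'_mul, IsLocalization.mk'_eq_iff_eq] at he
  have h := IsFractionRing.injective R K he
  push_cast at h
  have : a * (s - a) * s = 0 := by linear_combination -h
  exact (mul_right_mem_nonZeroDivisors_eq_zero_iff s.2).mp this

end

/-- If R is arithmetical, then every idempotent of Q_cl(R) lies in R. -/
theorem idempotent_of_fractionRing_mem_of_arithmetical (R : Type*) [CommRing R]
    (harith : ∀ I J K : Ideal R, I ⊓ (J ⊔ K) = (I ⊓ J) ⊔ (I ⊓ K))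
    (e : FractionRing R) (he : e * e = e) :
    ∃ r : R, algebraMap R (FractionRing R) r = e := by
  obtain ⟨⟨a, s⟩, rfl⟩ := IsLocalization.mk'_surjective R⁰ e
  have hab := IsFractionRing.mul_sub_eq_zero_of_isIdempotentElem_mk' (FractionRing R) he
  have hs : a + (s - a) ∈ R⁰ := by rw [add_sub_cancel]; exact s.2
  have ha := mem_span_singleton_add_of_mul_eq_zero harith hab hs
  rw [add_sub_cancel] at ha
  obtain ⟨t, ht⟩ := mem_span_singleton'.mp ha
  exact ⟨t, IsLocalization.eq_mk'_iff_mul_eq.mpr (by rw [← map_mul, ht])⟩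
end

section
/- Let R be a semiprime commutative Bezout Goldie ring and P a minimal prime ideal of R. Then the extension of P to the classical quotient ring Q_cl(R) is a prime ideal of Q_cl(R) generated by an idempotent. -/
/-- Every element of a minimal prime of a reduced ring is a zero divisor. -/
lemma my_minimal_zerodiv {R : Type*} [CommRing R] [IsReduced R]
    (P : Ideal R) (hP : P ∈ minimalPrimes R) {x : R} (hx : x ∈ P) :
    x ∉ nonZeroDivisors R := by
  haveI hPp : P.IsPrime := hP.1.1
  intro hreg
  have h1 : algebraMap R (Localization P.primeCompl) x ∈
      IsLocalRing.maximalIdeal (Localization P.primeCompl) :=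
    (IsLocalization.AtPrime.to_map_mem_maximal_iff _ P x).mpr hx
  obtain ⟨n, hn⟩ :=
    (show IsNilpotent (algebraMap R (Localization P.primeCompl) x) by
      have h := IsLocalization.AtPrime.radical_map_of_mem_minimalPrimes
        (A := Localization P.primeCompl) P ⊥ hP
      rw [Ideal.map_bot, IsLocalization.AtPrime.map_eq_maximalIdeal] at h
      have h2 : algebraMap R (Localization P.primeCompl) x ∈
          (⊥ : Ideal (Localization P.primeCompl)).radical := h ▸ h1
      exact mem_nilradical.mp h2)
  rw [← map_pow] at hn
  obtain ⟨m, hm⟩ := (IsLocalization.map_eq_zero_iff P.primeCompl _ _).mp hn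
  have hm0 : (m : R) ≠ 0 := by
    intro h
    exact m.2 (h ▸ P.zero_mem)
  cases n with
  | zero => simp at hm; exact hm0 hm
  | succ n =>
    have h2 : ((m : R) * x) ^ (n + 1) = 0 := by
      have : ((m : R)) ^ (n+1) * x ^ (n+1) = (m : R) ^ n * ((m : R) * x ^ (n+1)) := by ring
      rw [mul_pow, this, hm, mul_zero]
    have hmx : (m : R) * x = 0 := IsReduced.eq_zero _ ⟨n + 1, h2⟩
    exact hm0 (mem_nonZeroDivisors_iff_right.mp hreg _ hmx)

lemma myle_ann_ann {R : Type*} [CommRing R] (J : Ideal R) :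
    J ≤ Submodule.annihilator (Submodule.annihilator J : Ideal R) := by
  intro x hx
  rw [Submodule.mem_annihilator]
  intro n hn
  rw [Submodule.mem_annihilator] at hn
  rw [smul_eq_mul, mul_comm, ← smul_eq_mul]
  exact hn x hx

lemma myann3 {R : Type*} [CommRing R] (J : Ideal R) :
    Submodule.annihilator
      ((Submodule.annihilator (Submodule.annihilator J : Ideal R)) : Ideal R)
      = Submodule.annihilator J :=
  le_antisymm (Submodule.annihilator_mono (myle_ann_ann J)) (myle_ann_ann _)

/-- ACC on annihilator ideals implies the zip property. -/
lemma myzip {R : Type*} [CommRing R] (hacc : AccOnAnnihilators R) : IsZipRing R := by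
  intro I hI
  by_contra hcon
  push_neg at hcon
  have step : ∀ J : Ideal R, Submodule.annihilator J ≠ ⊥ →
      ∃ x, x ∈ I ∧
        ¬ Submodule.annihilator J ≤ Submodule.annihilator (Ideal.span {x} : Ideal R) := by
    intro J hJ
    by_contra h
    push_neg at h
    apply hJ
    rw [eq_bot_iff, ← hI]
    intro r hr
    rw [Submodule.mem_annihilator]
    intro y hy
    exact Submodule.mem_annihilator.mp (h y hy hr) y (Ideal.subset_span rfl)
  choose xf hxI hxlt using step
  let next : {J : Ideal R // J ≤ I ∧ J.FG} → {J : Ideal R // J ≤ I ∧ J.FG} := fun J =>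
    ⟨J.1 ⊔ Ideal.span {xf J.1 (hcon J.1 J.2.1 J.2.2)},
      sup_le J.2.1 (Ideal.span_le.mpr
        (Set.singleton_subset_iff.mpr (hxI J.1 (hcon J.1 J.2.1 J.2.2)))),
      Submodule.FG.sup J.2.2 (Submodule.fg_span_singleton _)⟩
  let F : ℕ → {J : Ideal R // J ≤ I ∧ J.FG} := fun n =>
    Nat.rec ⟨⊥, bot_le, Submodule.fg_bot⟩ (fun _ J => next J) n
  have hFsucc : ∀ n, F (n + 1) = next (F n) := fun n => rfl
  have hFmono : Monotone fun n => (F n).1 := by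
    apply monotone_nat_of_le_succ
    intro n
    rw [hFsucc n]
    exact le_sup_left
  have hBmono : Monotone fun n =>
      Submodule.annihilator
        ((Submodule.annihilator ((F n).1 : Ideal R)) : Ideal R) := by
    intro a b hab
    exact Submodule.annihilator_mono (Submodule.annihilator_mono (hFmono hab))
  obtain ⟨n, hn⟩ := hacc _ hBmono (fun n => ⟨_, rfl⟩)
  have hA : Submodule.annihilator ((F (n+1)).1 : Ideal R)
      = Submodule.annihilator ((F n).1 : Ideal R) := by
    have := congrArg (fun J : Ideal R => Submodule.annihilator (J : Ideal R))
      (hn (n+1) (Nat.le_succ n))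
    simpa only [myann3] using this
  have hxspan : Ideal.span {xf (F n).1 (hcon (F n).1 (F n).2.1 (F n).2.2)} ≤ (F (n+1)).1 := by
    rw [hFsucc n]
    exact le_sup_right
  exact hxlt (F n).1 (hcon (F n).1 (F n).2.1 (F n).2.2)
    (hA ▸ Submodule.annihilator_mono hxspan)

/-- In a semiprime Bezout Goldie ring, the extension of a minimal prime
to Q_cl(R) is a prime ideal generated by an idempotent. -/
theorem extension_of_minimal_prime (R : Type*) [CommRing R] [IsBezout R]
    (hsp : nilradical R = 0) (hG : IsGoldieRing R)
    (P : Ideal R) (hP : P ∈ minimalPrimes R) :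
    (P.map (algebraMap R (FractionRing R))).IsPrime ∧
      ∃ e : FractionRing R, IsIdempotentElem e ∧
        P.map (algebraMap R (FractionRing R)) = Ideal.span {e} := by
  haveI hred : IsReduced R := by
    constructor
    intro x hx
    have hx' : x ∈ nilradical R := hx
    rw [hsp] at hx'
    simpa using hx'
  haveI hPp : P.IsPrime := hP.1.1
  have hdisj : Disjoint ((nonZeroDivisors R : Set R)) (P : Set R) :=
    Set.disjoint_left.mpr fun x hx hxP => my_minimal_zerodiv P hP hxP hx
  refine ⟨IsLocalization.isPrime_of_isPrime_disjoint (nonZeroDivisors R)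
    (FractionRing R) P hPp hdisj, ?_⟩
  set A : Ideal R := Submodule.annihilator (P : Submodule R R) with hAdef
  have hannPA : Submodule.annihilator ((P ⊔ A : Ideal R) : Submodule R R) = ⊥ := by
    rw [eq_bot_iff]
    intro r hr
    rw [Submodule.mem_annihilator] at hr
    have hrA : r ∈ A :=
      Submodule.mem_annihilator.mpr fun p hp => hr p (Ideal.mem_sup_left hp)
    have hrr : r * r = 0 := hr r (Ideal.mem_sup_right hrA)
    have hr0 : r = 0 := IsReduced.eq_zero r ⟨2, by rwa [pow_two]⟩
    simpa using hr0
  obtain ⟨I₀, hI₀le, hI₀fg, hI₀ann⟩ := myzip hG.2 _ hannPA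
  obtain ⟨c, hc⟩ := (IsBezout.isPrincipal_of_FG I₀ hI₀fg).1
  have hcreg : c ∈ nonZeroDivisors R := by
    rw [mem_nonZeroDivisors_iff_right]
    intro z hz
    have hz' : z ∈ Submodule.annihilator I₀ := by
      rw [hc]
      exact (Submodule.mem_annihilator_span_singleton _ _).mpr
        (by rw [smul_eq_mul]; exact hz)
    rw [hI₀ann] at hz'
    simpa using hz'
  have hcPA : c ∈ P ⊔ A := hI₀le (hc ▸ Ideal.subset_span rfl)
  obtain ⟨p, hp, a, ha, hpa⟩ := Submodule.mem_sup.mp hcPA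
  obtain ⟨u, hu⟩ := IsLocalization.map_units (FractionRing R)
    (⟨c, hcreg⟩ : nonZeroDivisors R)
  set φ := algebraMap R (FractionRing R) with hφ
  set e : FractionRing R := φ p * ↑u⁻¹ with he
  have hemem : e ∈ P.map φ := Ideal.mul_mem_right _ _ (Ideal.mem_map_of_mem φ hp)
  have hmapann : ∀ q ∈ P.map φ, q * φ a = 0 := by
    intro q hq
    rw [Ideal.map, Ideal.span] at hq
    refine Submodule.span_induction ?_ ?_ ?_ ?_ hq
    · rintro _ ⟨y, hy, rfl⟩
      have hya : y * a = 0 := by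
        have h' := Submodule.mem_annihilator.mp ha y hy
        rwa [smul_eq_mul, mul_comm] at h'
      rw [← map_mul, hya, map_zero]
    · simp
    · intro x y _ _ hx hy
      rw [add_mul, hx, hy, add_zero]
    · intro r x _ hx
      rw [smul_mul_assoc, hx, smul_zero]
  have hone : e + φ a * ↑u⁻¹ = 1 := by
    have hs : φ p + φ a = φ c := by rw [← map_add, hpa]
    rw [he, ← add_mul, hs]
    have hcu : φ c = ↑u := hu.symm
    rw [hcu, Units.mul_inv]
  have hqe : ∀ q ∈ P.map φ, q = q * e := by
    intro q hq
    have h1 : q * (e + φ a * ↑u⁻¹) = q := by rw [hone, mul_one]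
    rw [mul_add, ← mul_assoc q (φ a), hmapann q hq, zero_mul, add_zero] at h1
    exact h1.symm
  have hidem : IsIdempotentElem e := (hqe e hemem).symm
  refine ⟨e, hidem, le_antisymm ?_
    (Ideal.span_le.mpr (Set.singleton_subset_iff.mpr hemem))⟩
  intro q hq
  rw [Ideal.mem_span_singleton]
  exact ⟨q, (hqe q hq).trans (mul_comm q e)⟩
end

section
/- In a commutative Bezout domain R with nonzero element a, writing Ann for annihilators in R/aR: if J₁, J₂ are principal ideals of R/aR and I₁ = Ann(J₁), I₂ = Ann(J₂), then Ann(I₁ ∩ I₂) = Ann(Ann(J₁) ∩ Ann(J₂)) = J₁ + J₂. -/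
open Ideal

private lemma ann_key (R : Type*) [CommRing R] [IsDomain R] (a b d c : R) (ha : a ≠ 0)
    (hd : Ideal.span {a, b} = Ideal.span {d}) (hc : a = c * d) :
    Submodule.annihilator (Ideal.span {Ideal.Quotient.mk (Ideal.span {a}) b} :
        Ideal (R ⧸ Ideal.span {a})) =
      Ideal.span {Ideal.Quotient.mk (Ideal.span {a}) c} := by
  have hd0 : d ≠ 0 := by rintro rfl; exact ha (by rw [hc, mul_zero])
  obtain ⟨e, he⟩ : d ∣ b := Ideal.mem_span_singleton.mp
    (hd ▸ Ideal.subset_span (by simp) : b ∈ Ideal.span {d})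
  obtain ⟨u, v, huv⟩ : ∃ u v, u * a + v * b = d := Ideal.mem_span_pair.mp
    (hd ▸ Ideal.subset_span (by simp) : d ∈ Ideal.span {a, b})
  have hca : c ∣ a := ⟨d, hc⟩
  have hcop : u * c + v * e = 1 := by
    apply mul_right_cancel₀ hd0
    linear_combination huv - u * hc - v * he
  -- membership in span {mk c} iff c ∣ w
  have hmem : ∀ w : R, (Ideal.Quotient.mk (Ideal.span {a}) w ∈
      Ideal.span {Ideal.Quotient.mk (Ideal.span {a}) c}) ↔ c ∣ w := by
    intro w
    rw [Ideal.mem_span_singleton]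
    constructor
    · rintro ⟨t', ht'⟩
      obtain ⟨t, rfl⟩ := Ideal.Quotient.mk_surjective t'
      rw [← _root_.map_mul, Ideal.Quotient.mk_eq_mk_iff_sub_mem] at ht'
      obtain ⟨s, hs⟩ := Ideal.mem_span_singleton.mp ht'
      have : w = c * t + a * s := by linear_combination hs
      exact this ▸ dvd_add (Dvd.intro t rfl) (Dvd.dvd.mul_right hca s)
    · rintro ⟨t, rfl⟩
      exact ⟨Ideal.Quotient.mk _ t, by rw [← _root_.map_mul]⟩
  ext z
  obtain ⟨w, rfl⟩ := Ideal.Quotient.mk_surjective z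
  erw [Submodule.mem_annihilator_span_singleton]
  rw [smul_eq_mul, ← _root_.map_mul,
    Ideal.Quotient.eq_zero_iff_mem, Ideal.mem_span_singleton, hmem]
  constructor
  · rintro ⟨k, hk⟩
    -- w*b = a*k ; w*e*d = c*k*d so w*e = c*k; then c ∣ w
    have hwe : w * e = c * k := by
      apply mul_right_cancel₀ hd0
      calc w * e * d = w * b := by rw [he]; ring
        _ = c * k * d := by rw [hk, hc]; ring
    have : w = (w * u) * c + v * (c * k) := by
      rw [← hwe]; linear_combination (-w) * hcop
    exact ⟨w * u + v * k, by linear_combination this⟩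
  · rintro ⟨s, rfl⟩
    exact ⟨s * e, by rw [hc, he]; ring⟩

private lemma double_ann (R : Type*) [CommRing R] [IsDomain R] [IsBezout R] (a b : R)
    (ha : a ≠ 0) :
    Submodule.annihilator (Submodule.annihilator (Ideal.span
        {Ideal.Quotient.mk (Ideal.span {a}) b} : Ideal (R ⧸ Ideal.span {a}))) =
      Ideal.span {Ideal.Quotient.mk (Ideal.span {a}) b} := by
  obtain ⟨d, hd⟩ := (IsBezout.span_pair_isPrincipal a b)
  rw [Ideal.submodule_span_eq] at hd
  obtain ⟨c, hc⟩ : d ∣ a := Ideal.mem_span_singleton.mp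
    (hd ▸ Ideal.subset_span (by simp) : a ∈ Ideal.span {d})
  rw [ann_key R a b d c ha hd (by rw [hc, mul_comm])]
  have hd2 : Ideal.span {a, c} = Ideal.span {c} := by
    apply le_antisymm
    · rw [Ideal.span_le]
      rintro z hz
      simp only [Set.mem_insert_iff, Set.mem_singleton_iff] at hz
      rcases hz with rfl | rfl
      · exact Ideal.mem_span_singleton.mpr ⟨d, by rw [hc, mul_comm]⟩
      · exact Ideal.subset_span rfl
    · exact Ideal.span_mono (by simp)
  rw [ann_key R a c c d ha hd2 hc]
  -- span {mk d} = span {mk b}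
  obtain ⟨e, he⟩ : d ∣ b := Ideal.mem_span_singleton.mp
    (hd ▸ Ideal.subset_span (by simp) : b ∈ Ideal.span {d})
  obtain ⟨u, v, huv⟩ : ∃ u v, u * a + v * b = d := Ideal.mem_span_pair.mp
    (hd ▸ Ideal.subset_span (by simp) : d ∈ Ideal.span {a, b})
  apply le_antisymm <;> rw [Ideal.span_singleton_le_span_singleton]
  · refine ⟨Ideal.Quotient.mk _ v, ?_⟩
    rw [← _root_.map_mul, Ideal.Quotient.mk_eq_mk_iff_sub_mem]
    exact Ideal.mem_span_singleton.mpr ⟨u, by linear_combination -huv⟩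
  · exact ⟨Ideal.Quotient.mk _ e, by rw [← _root_.map_mul, he]⟩

/-- In R/aR, Ann(Ann(J₁) ∩ Ann(J₂)) = J₁ + J₂ for principal ideals J₁, J₂. -/
theorem annihilator_inf_annihilator (R : Type*) [CommRing R] [IsDomain R] [IsBezout R]
    (a : R) (ha : a ≠ 0) (x y : R ⧸ (Ideal.span {a} : Ideal R)) :
    Submodule.annihilator
        (Submodule.annihilator (Ideal.span {x} : Ideal (R ⧸ Ideal.span {a})) ⊓
          Submodule.annihilator (Ideal.span {y} : Ideal (R ⧸ Ideal.span {a})))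
      = Ideal.span {x} ⊔ Ideal.span {y} := by
  -- Ann J₁ ⊓ Ann J₂ = Ann (J₁ ⊔ J₂)
  have hinf : Submodule.annihilator (Ideal.span {x} : Ideal (R ⧸ Ideal.span {a})) ⊓
      Submodule.annihilator (Ideal.span {y} : Ideal (R ⧸ Ideal.span {a})) =
      Submodule.annihilator (Ideal.span {x} ⊔ Ideal.span {y}) := by
    apply le_antisymm
    · intro z hz
      rw [Submodule.mem_annihilator]
      intro n hn
      rw [Submodule.mem_sup] at hn
      obtain ⟨p, hp, q, hq, rfl⟩ := hn
      rw [smul_add]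
      rw [Submodule.mem_inf, Submodule.mem_annihilator, Submodule.mem_annihilator] at hz
      rw [hz.1 p hp, hz.2 q hq, add_zero]
    · exact le_inf (Submodule.annihilator_mono le_sup_left)
        (Submodule.annihilator_mono le_sup_right)
  rw [hinf]
  -- J₁ ⊔ J₂ is principal
  obtain ⟨b₁, rfl⟩ := Ideal.Quotient.mk_surjective x
  obtain ⟨b₂, rfl⟩ := Ideal.Quotient.mk_surjective y
  obtain ⟨g, hg⟩ := (IsBezout.span_pair_isPrincipal b₁ b₂)
  rw [Ideal.submodule_span_eq] at hg
  have hsup : (Ideal.span {Ideal.Quotient.mk (Ideal.span {a}) b₁} ⊔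
      Ideal.span {Ideal.Quotient.mk (Ideal.span {a}) b₂} : Ideal (R ⧸ Ideal.span {a})) =
      Ideal.span {Ideal.Quotient.mk (Ideal.span {a}) g} := by
    rw [← Ideal.span_insert, ← Set.image_pair, ← Ideal.map_span, hg,
      Ideal.map_span, Set.image_singleton]
  rw [hsup, double_ann R a g ha]
end

section
/- Let R be a commutative Bezout domain, a ∈ R nonzero, and b̄ the image in R/aR of an element b dividing a. Then Ann(Ann(b̄·(R/aR))) = b̄·(R/aR), i.e., every principal ideal of R/aR is the annihilator of a principal ideal (double annihilator property). -/
/-!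
Write `a = b * c`. Cancelling `b` in the domain, `y * b ∈ (b * c)` iff `c ∣ y`, so in `R ⧸ (a)`
the annihilator of `b̄` is `(c̄)`; by symmetry the annihilator of `c̄` is `(b̄)`.
-/

open Ideal

theorem Ideal.annihilator_span_mk_eq_span_mk {R : Type*} [CommRing R] [IsDomain R]
    {a b c : R} (habc : b * c = a) (hb : b ≠ 0) :
    Submodule.annihilator (span {Quotient.mk (span {a}) b} : Ideal (R ⧸ span {a}))
      = span {Quotient.mk (span {a}) c} := by
  ext x
  obtain ⟨y, rfl⟩ := Quotient.mk_surjective x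
  have hac : span {a} ≤ span {c} :=
    span_singleton_le_span_singleton.mpr ⟨b, by rw [← habc, mul_comm]⟩
  rw [Submodule.mem_annihilator_span_singleton, smul_eq_mul, ← map_mul, Quotient.eq_zero_iff_mem,
    ← Set.image_singleton, ← map_span, mem_quotient_iff_mem hac, mem_span_singleton,
    mem_span_singleton, ← habc, mul_comm y, mul_dvd_mul_iff_left hb]

theorem double_annihilator_principal_general (R : Type*) [CommRing R] [IsDomain R]
    (a : R) (ha : a ≠ 0) (b : R) (hb : b ∣ a) :
    Submodule.annihilator
        (Submodule.annihilator
          (Ideal.span {Ideal.Quotient.mk (Ideal.span {a}) b}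
            : Ideal (R ⧸ (Ideal.span {a} : Ideal R))))
      = Ideal.span {Ideal.Quotient.mk (Ideal.span {a}) b} := by
  obtain ⟨c, rfl⟩ := hb
  rw [annihilator_span_mk_eq_span_mk rfl (left_ne_zero_of_mul ha),
    annihilator_span_mk_eq_span_mk (mul_comm c b) (right_ne_zero_of_mul ha)]

/-- In R/aR, for b dividing a, the double annihilator of the principal
ideal generated by the image of b is itself. -/
theorem double_annihilator_principal (R : Type*) [CommRing R] [IsDomain R] [IsBezout R]
    (a : R) (ha : a ≠ 0) (b : R) (hb : b ∣ a) :
    Submodule.annihilator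
        (Submodule.annihilator
          (Ideal.span {Ideal.Quotient.mk (Ideal.span {a}) b}
            : Ideal (R ⧸ (Ideal.span {a} : Ideal R))))
      = Ideal.span {Ideal.Quotient.mk (Ideal.span {a}) b} :=
  double_annihilator_principal_general R a ha b hb
end
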